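/- arXiv:2102.08560 — 10 statements merged into one kernel-verified Lean document; each statement's English description precedes it below -/
import Mathlib

section
/- If a tangle T is stringable, i.e., there exists a continuous surjection F : [0,1] → T that is injective on the open interval (0,1), then T is homeomorphic to one of the six basic stringable tangles: the unit interval, the circle, the lollipop, the figure 8, the handcuffs, or the theta. -/
noncomputable section

/-- A subset of ℝ³ built by gluing together finitely many copies of `[0,1]`. -/
def IsTangleSet (S : Set (ℝ × ℝ × ℝ)) : Prop :=
  IsConnected S ∧
  ∃ (m : ℕ) (f : Fin m → ℝ → ℝ × ℝ × ℝ),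
    1 ≤ m ∧
    (∀ i, ContinuousOn (f i) (Set.Icc 0 1)) ∧
    (∀ i, Set.InjOn (f i) (Set.Ico 0 1)) ∧
    (∀ i, Set.InjOn (f i) (Set.Ioc 0 1)) ∧
    (S = ⋃ i, f i '' Set.Icc 0 1) ∧
    (∀ i j, i ≠ j →
      f i '' Set.Icc 0 1 ∩ f j '' Set.Icc 0 1 ⊆
        ({f i 0, f i 1} : Set (ℝ × ℝ × ℝ)) ∩ ({f j 0, f j 1} : Set (ℝ × ℝ × ℝ)))

/-- A tangle is a topological space homeomorphic to such a subset of ℝ³. -/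
def IsTangle (T : Type) [TopologicalSpace T] : Prop :=
  ∃ S : Set (ℝ × ℝ × ℝ), IsTangleSet S ∧ Nonempty (T ≃ₜ ↥S)

/-- Unit circle centered at `c`. -/
def circleAt (c : ℝ × ℝ) : Set (ℝ × ℝ) := {p | (p.1 - c.1) ^ 2 + (p.2 - c.2) ^ 2 = 1}

/-- Horizontal segment from `(x₁,0)` to `(x₂,0)`. -/
def segAt (x₁ x₂ : ℝ) : Set (ℝ × ℝ) := {p | p.1 ∈ Set.Icc x₁ x₂ ∧ p.2 = 0}

def unitSegT : Set (ℝ × ℝ) := segAt 0 1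
def circleT : Set (ℝ × ℝ) := circleAt (0, 0)
def lollipopT : Set (ℝ × ℝ) := circleAt (0, 0) ∪ segAt 1 2
def figure8T : Set (ℝ × ℝ) := circleAt (-1, 0) ∪ circleAt (1, 0)
def handcuffsT : Set (ℝ × ℝ) := circleAt (-2, 0) ∪ circleAt (2, 0) ∪ segAt (-1) 1
def thetaT : Set (ℝ × ℝ) := circleAt (0, 0) ∪ segAt (-1) 1

/-- A space is stringable if there is a continuous surjection from `[0,1]` onto it
that is injective on the open interval `(0,1)`. -/
def Stringable (T : Type) [TopologicalSpace T] : Prop :=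
  ∃ F : ↥(Set.Icc (0 : ℝ) 1) → T,
    Continuous F ∧ Function.Surjective F ∧
    Set.InjOn F {x : ↥(Set.Icc (0 : ℝ) 1) | (x : ℝ) ∈ Set.Ioo (0 : ℝ) 1}

/-!
A stringing `F : [0,1] → T` of a Hausdorff space is a continuous surjection from a compact space,
hence a quotient map, so `T` is determined up to homeomorphism by which parameters `F` identifies.
As `F` is injective on `(0,1)`, the only possible identifications are `F 0 = F 1` and, for each
endpoint, at most one interior parameter with the same image. Up to reversing the parameter this
leaves six patterns, and each one is realised by an explicit stringing of one of the planar models,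
obtained by concatenating loops around circles, half circles and segments.
-/

open Set Function Topology Real unitInterval

namespace StringableTangle

theorem eq_iff_eq_of_injOn {α β γ : Type*} {f : α → β} {g : α → γ} {s : Set α} {a : α}
    {y : β} {z : γ} (hf : InjOn f s) (hg : InjOn g s) (ha : a ∈ s) (hfa : f a = y) (hga : g a = z) :
    ∀ x ∈ s, f x = y ↔ g x = z := by
  rintro x hx
  subst hfa hga
  rw [hf.eq_iff hx ha, hg.eq_iff hx ha]

section Stringing

variable {X Y : Type*}

theorem eq_zero_or_eq_one_or_mem_Ioo (x : I) : x = 0 ∨ x = 1 ∨ x ∈ Ioo 0 1 := by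
  rcases x.2.1.eq_or_lt with h | h
  · exact .inl (Subtype.ext h.symm)
  rcases x.2.2.eq_or_lt with h' | h'
  · exact .inr (.inl (Subtype.ext h'))
  · exact .inr (.inr ⟨h, h'⟩)

theorem symm_mem_Ioo {x : I} (hx : x ∈ Ioo 0 1) : σ x ∈ Ioo 0 1 :=
  ⟨by simpa [symm_one] using symm_lt_symm.2 hx.2, by simpa [symm_zero] using symm_lt_symm.2 hx.1⟩

theorem eq_iff_eq_of_returns {F : I → X} {G : I → Y} (hF : InjOn F (Ioo 0 1))
    (hG : InjOn G (Ioo 0 1)) (h01 : F 0 = F 1 ↔ G 0 = G 1)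
    (h0 : ∀ x ∈ Ioo 0 1, F x = F 0 ↔ G x = G 0) (h1 : ∀ x ∈ Ioo 0 1, F x = F 1 ↔ G x = G 1)
    (x y : I) : F x = F y ↔ G x = G y := by
  have hend (x y : I) (hy : y = 0 ∨ y = 1) : F x = F y ↔ G x = G y := by
    rcases hy with rfl | rfl <;> rcases eq_zero_or_eq_one_or_mem_Ioo x with rfl | rfl | hx
    · exact iff_of_true rfl rfl
    · rw [eq_comm, h01, eq_comm]
    · exact h0 x hx
    · exact h01
    · exact iff_of_true rfl rfl
    · exact h1 x hx
  rcases eq_zero_or_eq_one_or_mem_Ioo y with rfl | rfl | hy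
  · exact hend x 0 (.inl rfl)
  · exact hend x 1 (.inr rfl)
  rcases eq_zero_or_eq_one_or_mem_Ioo x with rfl | rfl | hx
  · rw [eq_comm, hend y 0 (.inl rfl), eq_comm]
  · rw [eq_comm, hend y 1 (.inr rfl), eq_comm]
  · rw [hF.eq_iff hx hy, hG.eq_iff hx hy]

variable [TopologicalSpace X] [TopologicalSpace Y]

theorem nonempty_homeomorph_of_eq_iff_eq {Z : Type*} [TopologicalSpace Z] [CompactSpace Z]
    [T2Space X] [T2Space Y] {F : Z → X} {G : Z → Y} (hFc : Continuous F) (hGc : Continuous G)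
    (hFs : Surjective F) (hGs : Surjective G) (h : ∀ z z', F z = F z' ↔ G z = G z') :
    Nonempty (X ≃ₜ Y) := by
  have hFq : IsQuotientMap (⟨F, hFc⟩ : C(Z, X)) := .of_surjective_continuous hFs hFc
  have hGq : IsQuotientMap (⟨G, hGc⟩ : C(Z, Y)) := .of_surjective_continuous hGs hGc
  have hφ := hFq.lift_comp ⟨G, hGc⟩ fun _ _ => (h _ _).1
  have hψ := hGq.lift_comp ⟨F, hFc⟩ fun _ _ => (h _ _).2
  set φ := hFq.lift ⟨G, hGc⟩ fun _ _ => (h _ _).1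
  set ψ := hGq.lift ⟨F, hFc⟩ fun _ _ => (h _ _).2
  replace hφ (z : Z) : φ (F z) = G z := DFunLike.congr_fun hφ z
  replace hψ (z : Z) : ψ (G z) = F z := DFunLike.congr_fun hψ z
  exact ⟨{ toFun := φ, invFun := ψ
           left_inv := hFs.forall.2 fun z => by simp only [hφ, hψ]
           right_inv := hGs.forall.2 fun z => by simp only [hφ, hψ] }⟩

structure IsStringing (F : I → X) : Prop where
  continuous : Continuous F
  surjective : Surjective F
  injOn : InjOn F (Ioo 0 1)

theorem IsStringing.comp_symm {F : I → X} (hF : IsStringing F) : IsStringing (F ∘ σ) where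
  continuous := hF.continuous.comp continuous_symm
  surjective := hF.surjective.comp symm_bijective.surjective
  injOn := hF.injOn.comp symm_bijective.injective.injOn fun _ => symm_mem_Ioo

theorem nonempty_homeomorph_of_returns [T2Space X] [T2Space Y] {F : I → X} {G : I → Y}
    (hF : IsStringing F) (hG : IsStringing G) (h01 : F 0 = F 1 ↔ G 0 = G 1)
    (h0 : ∀ x ∈ Ioo 0 1, F x = F 0 ↔ G x = G 0) (h1 : ∀ x ∈ Ioo 0 1, F x = F 1 ↔ G x = G 1) :
    Nonempty (X ≃ₜ Y) :=
  nonempty_homeomorph_of_eq_iff_eq hF.continuous hG.continuous hF.surjective hG.surjective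
    (eq_iff_eq_of_returns hF.injOn hG.injOn h01 h0 h1)

end Stringing

section Glue

variable {E : Type*}

def glue (a : ℝ) (p q : ℝ → E) (t : ℝ) : E :=
  if t ≤ a then p (t / a) else q ((t - a) / (1 - a))

variable {a t : ℝ} {p q : ℝ → E}

theorem glue_of_le (ht : t ≤ a) : glue a p q t = p (t / a) := if_pos ht

theorem glue_of_lt (ht : a < t) : glue a p q t = q ((t - a) / (1 - a)) := if_neg ht.not_ge

theorem glue_zero (ha : 0 ≤ a) : glue a p q 0 = p 0 := by rw [glue_of_le ha, zero_div]

theorem glue_self (ha : a ≠ 0) : glue a p q a = p 1 := by rw [glue_of_le le_rfl, div_self ha]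

theorem glue_one (ha : a < 1) : glue a p q 1 = q 1 := by
  rw [glue_of_lt ha, div_self (sub_ne_zero.2 ha.ne')]

theorem continuous_glue [TopologicalSpace E] (ha : a ≠ 0) (hp : Continuous p)
    (hq : Continuous q) (hpq : p 1 = q 0) : Continuous (glue a p q) :=
  Continuous.if_le (hp.comp (continuous_id.div_const a))
    (hq.comp ((continuous_id.sub continuous_const).div_const _)) continuous_id continuous_const
    fun t ht => by simp [ht, ha, hpq]

theorem div_mem_Ioc (ha : 0 < a) (ht : t ∈ Ioc 0 a) : t / a ∈ Ioc 0 1 :=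
  ⟨div_pos ht.1 ha, (div_le_one ha).2 ht.2⟩

theorem sub_div_mem_Ioo (ha : a < 1) (ht : t ∈ Ioo a 1) : (t - a) / (1 - a) ∈ Ioo 0 1 :=
  ⟨div_pos (sub_pos.2 ht.1) (sub_pos.2 ha), (div_lt_one (sub_pos.2 ha)).2 (by linarith [ht.2])⟩

theorem image_glue_Icc (ha : a ∈ Ioo 0 1) (hpq : p 1 = q 0) :
    glue a p q '' Icc 0 1 = p '' Icc 0 1 ∪ q '' Icc 0 1 := by
  obtain ⟨ha₀, ha₁⟩ := ha
  apply Subset.antisymm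
  · rintro _ ⟨t, ht, rfl⟩
    rcases le_or_gt t a with hta | hta
    · exact .inl ⟨_, div_mem ht.1 ha₀.le hta, (glue_of_le hta).symm⟩
    · exact .inr ⟨_, div_mem (sub_nonneg.2 hta.le) (sub_pos.2 ha₁).le (by linarith [ht.2]),
        (glue_of_lt hta).symm⟩
  · rintro _ (⟨s, hs, rfl⟩ | ⟨s, hs, rfl⟩)
    · refine ⟨a * s, ⟨by nlinarith [hs.1], by nlinarith [hs.2]⟩, ?_⟩
      rw [glue_of_le (by nlinarith [hs.2]), mul_div_cancel_left₀ _ ha₀.ne']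
    · rcases hs.1.eq_or_lt with rfl | hs₀
      · exact ⟨a, ⟨ha₀.le, ha₁.le⟩, by rw [glue_self ha₀.ne', hpq]⟩
      · refine ⟨a + (1 - a) * s, ⟨by nlinarith [hs.1], by nlinarith [hs.2]⟩, ?_⟩
        rw [glue_of_lt (by nlinarith), add_sub_cancel_left,
          mul_div_cancel_left₀ _ (sub_pos.2 ha₁).ne']

theorem image_glue_Ioo_subset (ha : a ∈ Ioo 0 1) :
    glue a p q '' Ioo 0 1 ⊆ p '' Ioc 0 1 ∪ q '' Ioo 0 1 := by
  rintro _ ⟨t, ht, rfl⟩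
  rcases le_or_gt t a with hta | hta
  · exact .inl ⟨_, div_mem_Ioc ha.1 ⟨ht.1, hta⟩, (glue_of_le hta).symm⟩
  · exact .inr ⟨_, sub_div_mem_Ioo ha.2 ⟨hta, ht.2⟩, (glue_of_lt hta).symm⟩

theorem injOn_glue (ha : a ∈ Ioo 0 1) (hp : InjOn p (Ioc 0 1)) (hq : InjOn q (Ioo 0 1))
    (hpq : Disjoint (p '' Ioc 0 1) (q '' Ioo 0 1)) : InjOn (glue a p q) (Ioo 0 1) := by
  obtain ⟨ha₀, ha₁⟩ := ha
  have hleft : InjOn (glue a p q) (Ioc 0 a) := fun s hs t ht h => by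
    rw [glue_of_le hs.2, glue_of_le ht.2] at h
    exact (div_left_inj' ha₀.ne').1 (hp (div_mem_Ioc ha₀ hs) (div_mem_Ioc ha₀ ht) h)
  have hright : InjOn (glue a p q) (Ioo a 1) := fun s hs t ht h => by
    rw [glue_of_lt hs.1, glue_of_lt ht.1] at h
    exact sub_left_inj.1 <| (div_left_inj' (sub_pos.2 ha₁).ne').1 <|
      hq (sub_div_mem_Ioo ha₁ hs) (sub_div_mem_Ioo ha₁ ht) h
  rw [← Ioc_union_Ioo_eq_Ioo ha₀.le ha₁,
    injOn_union (Ioc_disjoint_Ioi_same.mono_right Ioo_subset_Ioi_self)]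
  refine ⟨hleft, hright, fun s hs t ht h => ?_⟩
  rw [glue_of_le hs.2, glue_of_lt ht.1] at h
  exact disjoint_left.1 hpq ⟨_, div_mem_Ioc ha₀ hs, h⟩ ⟨_, sub_div_mem_Ioo ha₁ ht, rfl⟩

end Glue
theorem exists_cos_sin_eq {x y : ℝ} (h : x ^ 2 + y ^ 2 = 1) :
    ∃ θ ∈ Icc 0 (2 * π), cos θ = x ∧ sin θ = y := by
  have hx₁ : -1 ≤ x := by nlinarith
  have hx₂ : x ≤ 1 := by nlinarith
  have hsin : sin (arccos x) = |y| := by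
    rw [sin_arccos, show 1 - x ^ 2 = y ^ 2 by linarith, sqrt_sq_eq_abs]
  have h₀ := arccos_nonneg x
  have hπ := arccos_le_pi x
  rcases le_total 0 y with hy | hy
  · exact ⟨arccos x, ⟨h₀, by linarith [pi_pos]⟩, cos_arccos hx₁ hx₂, by rw [hsin, abs_of_nonneg hy]⟩
  · refine ⟨2 * π - arccos x, ⟨by linarith, by linarith⟩, ?_, ?_⟩
    · rw [cos_two_pi_sub, cos_arccos hx₁ hx₂]
    · rw [sin_two_pi_sub, hsin, abs_of_nonpos hy, neg_neg]

theorem circleExp_eq_of_cos_eq_of_sin_eq {x y : ℝ} (hc : cos x = cos y) (hs : sin x = sin y) :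
    Circle.exp x = Circle.exp y :=
  Circle.ext <| Complex.ext (by simp [Complex.exp_ofReal_mul_I_re, hc])
    (by simp [Complex.exp_ofReal_mul_I_im, hs])

theorem mem_circleAt {c p : ℝ × ℝ} : p ∈ circleAt c ↔ (p.1 - c.1) ^ 2 + (p.2 - c.2) ^ 2 = 1 :=
  Iff.rfl

section Loop

variable {c : ℝ × ℝ} {ε : ℝ}

def loop (c : ℝ × ℝ) (ε s : ℝ) : ℝ × ℝ :=
  (c.1 + ε * cos (2 * π * s), c.2 + ε * sin (2 * π * s))

theorem continuous_loop : Continuous (loop c ε) := by unfold loop; fun_prop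

@[simp] theorem loop_zero : loop c ε 0 = (c.1 + ε, c.2) := by simp [loop]

@[simp] theorem loop_one : loop c ε 1 = (c.1 + ε, c.2) := by simp [loop]

theorem loop_mem (hε : ε ^ 2 = 1) (s : ℝ) : loop c ε s ∈ circleAt c := by
  rw [mem_circleAt, loop, add_sub_cancel_left, add_sub_cancel_left]
  linear_combination ε ^ 2 * sin_sq_add_cos_sq (2 * π * s) + hε

theorem image_loop_Icc (hε : ε ^ 2 = 1) : loop c ε '' Icc 0 1 = circleAt c := by
  refine Subset.antisymm (image_subset_iff.2 fun s _ => loop_mem hε s) fun p hp => ?_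
  obtain ⟨θ, hθ, hcos, hsin⟩ :=
    exists_cos_sin_eq (x := ε * (p.1 - c.1)) (y := ε * (p.2 - c.2)) (by
      linear_combination ε ^ 2 * mem_circleAt.1 hp + hε)
  have hπ := two_pi_pos
  refine ⟨θ / (2 * π), ⟨div_nonneg hθ.1 hπ.le, (div_le_one hπ).2 hθ.2⟩, ?_⟩
  rw [loop, mul_div_cancel₀ _ hπ.ne', hcos, hsin]
  ext
  · linear_combination (p.1 - c.1) * hε
  · linear_combination (p.2 - c.2) * hε

theorem circleExp_eq_of_loop_eq (hε : ε ≠ 0) {s t : ℝ} (h : loop c ε s = loop c ε t) :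
    Circle.exp (2 * π * s) = Circle.exp (2 * π * t) := by
  simp only [loop, Prod.mk.injEq, add_right_inj, mul_right_inj' hε] at h
  exact circleExp_eq_of_cos_eq_of_sin_eq h.1 h.2

theorem injOn_loop (hε : ε ≠ 0) {S : Set ℝ} (hS : ∀ s ∈ S, ∀ t ∈ S, s - t ∈ Ioo (-1) 1) :
    InjOn (loop c ε) S := fun s hs t ht h => by
  refine mul_left_cancel₀ two_pi_pos.ne' <|
    Circle.exp_injOn_of_forall_sub_mem_Ioo (s := (2 * π * ·) '' S) ?_ ⟨s, hs, rfl⟩ ⟨t, ht, rfl⟩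
      (circleExp_eq_of_loop_eq hε h)
  rintro _ ⟨s, hs, rfl⟩ _ ⟨t, ht, rfl⟩
  have := hS s hs t ht
  constructor <;> nlinarith [this.1, this.2, pi_pos]

theorem injOn_loop_Ico (hε : ε ≠ 0) : InjOn (loop c ε) (Ico 0 1) :=
  injOn_loop hε fun _ hs _ ht => ⟨by linarith [hs.1, ht.2], by linarith [hs.2, ht.1]⟩

theorem injOn_loop_Ioc (hε : ε ≠ 0) : InjOn (loop c ε) (Ioc 0 1) :=
  injOn_loop hε fun _ hs _ ht => ⟨by linarith [hs.1, ht.2], by linarith [hs.2, ht.1]⟩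

theorem loop_ne_of_mem_Ioo (hε : ε ≠ 0) {s : ℝ} (hs : s ∈ Ioo 0 1) :
    loop c ε s ≠ (c.1 + ε, c.2) := by
  rw [← loop_zero (ε := ε)]
  exact fun h => hs.1.ne' (injOn_loop_Ico hε (Ioo_subset_Ico_self hs) ⟨le_rfl, one_pos⟩ h)

end Loop

section Segment

variable {x₁ x₂ : ℝ}

def seg (x₁ x₂ s : ℝ) : ℝ × ℝ := (x₁ + (x₂ - x₁) * s, 0)

theorem continuous_seg : Continuous (seg x₁ x₂) := by unfold seg; fun_prop

@[simp] theorem seg_zero : seg x₁ x₂ 0 = (x₁, 0) := by simp [seg]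

@[simp] theorem seg_one : seg x₁ x₂ 1 = (x₂, 0) := by simp [seg]

theorem injective_seg (h : x₁ ≠ x₂) : Injective (seg x₁ x₂) := fun s t hst => by
  simp only [seg, Prod.mk.injEq, add_right_inj, and_true] at hst
  exact mul_left_cancel₀ (sub_ne_zero.2 h.symm) hst

theorem image_seg_Icc (h : x₁ < x₂) : seg x₁ x₂ '' Icc 0 1 = segAt x₁ x₂ := by
  apply Subset.antisymm
  · rintro _ ⟨s, hs, rfl⟩
    refine ⟨⟨?_, ?_⟩, rfl⟩ <;> simp only [seg] <;> nlinarith [hs.1, hs.2]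
  · rintro p ⟨hp, hp₂⟩
    have h₁ : 0 < x₂ - x₁ := sub_pos.2 h
    refine ⟨(p.1 - x₁) / (x₂ - x₁), ⟨div_nonneg (by linarith [hp.1]) h₁.le,
      (div_le_one h₁).2 (by linarith [hp.2])⟩, ?_⟩
    ext
    · simp [seg, mul_div_cancel₀ _ h₁.ne']
    · exact hp₂.symm

end Segment

section Arc

variable {ε : ℝ}

def arc (ε s : ℝ) : ℝ × ℝ := (cos (π * s), ε * sin (π * s))

theorem continuous_arc : Continuous (arc ε) := by unfold arc; fun_prop

@[simp] theorem arc_zero : arc ε 0 = (1, 0) := by simp [arc]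

@[simp] theorem arc_one : arc ε 1 = (-1, 0) := by simp [arc]

theorem injOn_arc : InjOn (arc ε) (Icc 0 1) := fun s hs t ht h => by
  have hmem {r : ℝ} (hr : r ∈ Icc (0:ℝ) 1) : π * r ∈ Icc 0 π :=
    ⟨by nlinarith [hr.1, pi_pos], by nlinarith [hr.2, pi_pos]⟩
  exact mul_left_cancel₀ pi_pos.ne' (injOn_cos (hmem hs) (hmem ht) (congrArg Prod.fst h))

theorem mul_arc_snd_pos (hε : ε ^ 2 = 1) {s : ℝ} (hs : s ∈ Ioo 0 1) : 0 < ε * (arc ε s).2 := by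
  have := sin_pos_of_pos_of_lt_pi (mul_pos pi_pos hs.1) (by nlinarith [hs.2, pi_pos])
  simp only [arc, ← mul_assoc, ← sq, hε, one_mul, this]

theorem arc_mem (hε : ε ^ 2 = 1) (s : ℝ) : arc ε s ∈ circleAt (0, 0) := by
  rw [mem_circleAt, arc, sub_zero, sub_zero]
  linear_combination sin (π * s) ^ 2 * hε + sin_sq_add_cos_sq (π * s)

theorem image_arc_union : arc 1 '' Icc 0 1 ∪ arc (-1) '' Icc 0 1 = circleAt (0, 0) := by
  refine Subset.antisymm (union_subset (image_subset_iff.2 fun s _ => arc_mem (by norm_num) s)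
    (image_subset_iff.2 fun s _ => arc_mem (by norm_num) s)) fun p hp => ?_
  obtain ⟨θ, hθ, hcos, hsin⟩ := exists_cos_sin_eq (by simpa [mem_circleAt] using hp)
  have hπ := pi_pos
  rcases le_total θ π with hθπ | hθπ
  · refine Or.inl ⟨θ / π, ⟨div_nonneg hθ.1 hπ.le, (div_le_one hπ).2 hθπ⟩, ?_⟩
    rw [arc, mul_div_cancel₀ _ hπ.ne', hcos, hsin, one_mul]
  · refine Or.inr ⟨(2 * π - θ) / π, ⟨div_nonneg (by linarith [hθ.2]) hπ.le,
      (div_le_one hπ).2 (by linarith)⟩, ?_⟩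
    rw [arc, mul_div_cancel₀ _ hπ.ne', cos_two_pi_sub, sin_two_pi_sub, hcos, hsin, neg_one_mul,
      neg_neg]

end Arc

section Models

theorem exists_isStringing_of_image {M : Set (ℝ × ℝ)} {g : ℝ → ℝ × ℝ} (hc : Continuous g)
    (himg : g '' Icc 0 1 = M) (hinj : InjOn g (Ioo 0 1)) :
    ∃ G : I → M, IsStringing G ∧ ∀ x y, G x = G y ↔ g x = g y := by
  refine ⟨fun x => ⟨g x, himg ▸ mem_image_of_mem g x.2⟩, ⟨?_, ?_, ?_⟩, fun x y => Subtype.ext_iff⟩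
  · exact (hc.comp continuous_subtype_val).subtype_mk _
  · rintro ⟨_, hp⟩
    obtain ⟨t, ht, rfl⟩ := himg ▸ hp
    exact ⟨⟨t, ht⟩, rfl⟩
  · exact fun x hx y hy h => Subtype.ext (hinj hx hy (congrArg Subtype.val h))

theorem exists_isStringing_unitSeg : ∃ G : I → unitSegT, IsStringing G ∧ Injective G := by
  obtain ⟨G, hG, hGg⟩ := exists_isStringing_of_image (M := unitSegT) continuous_seg
    (image_seg_Icc zero_lt_one) (injective_seg zero_ne_one).injOn
  exact ⟨G, hG, fun x y h => Subtype.ext (injective_seg zero_ne_one ((hGg x y).1 h))⟩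

theorem exists_isStringing_circle :
    ∃ G : I → circleT, IsStringing G ∧ G 0 = G 1 ∧ ∀ x ∈ Ioo 0 1, G x ≠ G 0 := by
  obtain ⟨G, hG, hGg⟩ := exists_isStringing_of_image (M := circleT) continuous_loop
    (image_loop_Icc (one_pow 2)) ((injOn_loop_Ico one_ne_zero).mono Ioo_subset_Ico_self)
  refine ⟨G, hG, by simp [hGg], fun x hx => ?_⟩
  simpa [hGg] using loop_ne_of_mem_Ioo (c := (0, 0)) one_ne_zero hx

theorem exists_isStringing_lollipop {a : I} (ha : a ∈ Ioo 0 1) :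
    ∃ G : I → lollipopT, IsStringing G ∧ G a = G 0 ∧ G 0 ≠ G 1 ∧ ∀ x ∈ Ioo 0 1, G x ≠ G 1 := by
  replace ha : (a : ℝ) ∈ Ioo 0 1 := ha
  have hdisj : Disjoint (loop (0, 0) 1 '' Ioc 0 1) (seg 1 2 '' Ioo 0 1) := by
    refine disjoint_left.2 ?_
    rintro _ ⟨s, -, rfl⟩ ⟨t, ht, h⟩
    have := mem_circleAt.1 (loop_mem (c := (0, 0)) (one_pow 2) s)
    rw [← h] at this
    simp only [seg] at this
    nlinarith [ht.1]
  obtain ⟨G, hG, hGg⟩ := exists_isStringing_of_image (M := lollipopT)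
    (continuous_glue ha.1.ne' continuous_loop continuous_seg (by simp))
    (by rw [image_glue_Icc ha (by simp), image_loop_Icc (one_pow 2), image_seg_Icc one_lt_two]; rfl)
    (injOn_glue ha (injOn_loop_Ioc one_ne_zero) (injective_seg (by norm_num)).injOn hdisj)
  refine ⟨G, hG, ?_, ?_, fun x hx h => ?_⟩
  · simp [hGg, glue_self ha.1.ne', glue_zero ha.1.le]
  · simp [hGg, glue_one ha.2, glue_zero ha.1.le]
  · rw [hGg, Icc.coe_one, glue_one ha.2, seg_one] at h
    rcases image_glue_Ioo_subset ha ⟨x, hx, h⟩ with ⟨s, -, hs⟩ | ⟨s, hs, hs'⟩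
    · have := mem_circleAt.1 (loop_mem (c := (0, 0)) (one_pow 2) s)
      rw [hs] at this
      norm_num at this
    · exact hs.2.ne (injective_seg (by norm_num) (hs'.trans seg_one.symm))

theorem exists_isStringing_figure8 {a : I} (ha : a ∈ Ioo 0 1) :
    ∃ G : I → figure8T, IsStringing G ∧ G a = G 0 ∧ G 0 = G 1 := by
  replace ha : (a : ℝ) ∈ Ioo 0 1 := ha
  have hdisj : Disjoint (loop (-1, 0) 1 '' Ioc 0 1) (loop (1, 0) (-1) '' Ioo 0 1) := by
    refine disjoint_left.2 ?_
    rintro _ ⟨s, -, rfl⟩ ⟨t, ht, h⟩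
    have h₁ := mem_circleAt.1 (loop_mem (c := (-1, 0)) (one_pow 2) s)
    have h₂ := mem_circleAt.1 (loop_mem (c := (1, 0)) neg_one_sq t)
    rw [← h] at h₁
    refine loop_ne_of_mem_Ioo (c := (1, 0)) (ε := -1) (by norm_num) ht (Prod.ext ?_ ?_) <;>
      simp only at h₁ h₂ ⊢ <;> nlinarith
  obtain ⟨G, hG, hGg⟩ := exists_isStringing_of_image (M := figure8T)
    (continuous_glue ha.1.ne' continuous_loop continuous_loop (by norm_num))
    (by rw [image_glue_Icc ha (by norm_num), image_loop_Icc (one_pow 2),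
      image_loop_Icc neg_one_sq]; rfl)
    (injOn_glue ha (injOn_loop_Ioc one_ne_zero)
      ((injOn_loop_Ico (by norm_num)).mono Ioo_subset_Ico_self) hdisj)
  refine ⟨G, hG, ?_, ?_⟩
  · simp [hGg, glue_self ha.1.ne', glue_zero ha.1.le]
  · simp only [hGg, Icc.coe_zero, Icc.coe_one, glue_one ha.2, glue_zero ha.1.le]
    norm_num

theorem exists_isStringing_handcuffs {a b : I} (ha : a ∈ Ioo 0 1) (hb : b ∈ Ioo 0 1)
    (hab : a < b) : ∃ G : I → handcuffsT, IsStringing G ∧ G a = G 0 ∧ G b = G 1 ∧ G 0 ≠ G 1 := by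
  replace ha : (a : ℝ) ∈ Ioo 0 1 := ha
  set c := ((b : ℝ) - a) / (1 - a) with hc_def
  have hc : c ∈ Ioo 0 1 := sub_div_mem_Ioo ha.2 ⟨hab, hb.2⟩
  set segThenLoop := glue c (seg (-1) 1) (loop (2, 0) (-1))
  have hinj : InjOn segThenLoop (Ioo 0 1) := by
    refine injOn_glue hc (injective_seg (by norm_num)).injOn
      ((injOn_loop_Ico (by norm_num)).mono Ioo_subset_Ico_self) (disjoint_left.2 ?_)
    rintro _ ⟨s, hs, rfl⟩ ⟨t, ht, h⟩
    have h₂ := mem_circleAt.1 (loop_mem (c := (2, 0)) neg_one_sq t)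
    rw [h] at h₂
    have hx : (seg (-1) 1 s).1 = 1 := by
      simp only [seg] at h₂ ⊢
      nlinarith [hs.2]
    exact loop_ne_of_mem_Ioo (c := (2, 0)) (ε := -1) (by norm_num) ht
      (h.trans (Prod.ext (by rw [hx]; norm_num) rfl))
  have hdisj : Disjoint (loop (-2, 0) 1 '' Ioc 0 1) (segThenLoop '' Ioo 0 1) := by
    refine disjoint_left.2 ?_
    rintro _ ⟨s, -, rfl⟩ hp
    have h₁ := mem_circleAt.1 (loop_mem (c := (-2, 0)) (one_pow 2) s)
    rcases image_glue_Ioo_subset hc hp with ⟨t, ht, h⟩ | ⟨t, -, h⟩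
    · rw [← h] at h₁
      simp only [seg] at h₁
      nlinarith [ht.1]
    · have h₂ := mem_circleAt.1 (loop_mem (c := (2, 0)) neg_one_sq t)
      rw [h] at h₂
      simp only at h₁ h₂
      nlinarith
  obtain ⟨G, hG, hGg⟩ := exists_isStringing_of_image (M := handcuffsT)
    (continuous_glue ha.1.ne' continuous_loop
      (continuous_glue hc.1.ne' continuous_seg continuous_loop (by norm_num))
      (by rw [glue_zero hc.1.le]; norm_num))
    (by rw [image_glue_Icc ha (by rw [glue_zero hc.1.le]; norm_num),
      image_glue_Icc hc (by norm_num), image_loop_Icc (one_pow 2), image_loop_Icc neg_one_sq,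
      image_seg_Icc (by norm_num), union_comm (segAt _ _), ← union_assoc]; rfl)
    (injOn_glue ha (injOn_loop_Ioc one_ne_zero) hinj hdisj)
  refine ⟨G, hG, ?_, ?_, ?_⟩
  · simp [hGg, glue_self ha.1.ne', glue_zero ha.1.le]
  · simp only [hGg, Icc.coe_one, glue_one ha.2, glue_of_lt hab, ← hc_def, glue_one hc.2,
      glue_self hc.1.ne']
    norm_num
  · simp only [ne_eq, hGg, Icc.coe_zero, Icc.coe_one, glue_one ha.2, glue_zero ha.1.le,
      glue_one hc.2]
    norm_num

theorem exists_isStringing_theta {a b : I} (ha : a ∈ Ioo 0 1) (hb : b ∈ Ioo 0 1) (hba : b < a) :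
    ∃ G : I → thetaT, IsStringing G ∧ G a = G 0 ∧ G b = G 1 ∧ G 0 ≠ G 1 := by
  replace hb : (b : ℝ) ∈ Ioo 0 1 := hb
  set c := ((a : ℝ) - b) / (1 - b) with hc_def
  have hc : c ∈ Ioo 0 1 := sub_div_mem_Ioo hb.2 ⟨hba, ha.2⟩
  set segThenArc := glue c (seg (-1) 1) (arc (-1))
  have hinj : InjOn segThenArc (Ioo 0 1) := by
    refine injOn_glue hc (injective_seg (by norm_num)).injOn
      (injOn_arc.mono Ioo_subset_Icc_self) (disjoint_left.2 ?_)
    rintro _ ⟨s, -, rfl⟩ ⟨t, ht, h⟩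
    have := mul_arc_snd_pos neg_one_sq ht
    rw [h] at this
    simp [seg] at this
  have hdisj : Disjoint (arc 1 '' Ioc 0 1) (segThenArc '' Ioo 0 1) := by
    refine disjoint_left.2 ?_
    rintro _ ⟨s, hs, rfl⟩ hp
    rcases image_glue_Ioo_subset hc hp with ⟨t, ht, h⟩ | ⟨t, ht, h⟩
    · rcases hs.2.eq_or_lt with rfl | hs₁
      · rw [arc_one, ← seg_zero (x₁ := -1) (x₂ := 1)] at h
        exact ht.1.ne' (injective_seg (by norm_num) h)
      · have := mul_arc_snd_pos (one_pow 2) ⟨hs.1, hs₁⟩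
        rw [← h] at this
        simp [seg] at this
    · have h₁ : 0 ≤ (arc 1 s).2 := by
        simpa [arc] using sin_nonneg_of_nonneg_of_le_pi (by nlinarith [hs.1, pi_pos])
          (by nlinarith [hs.2, pi_pos])
      have h₂ := mul_arc_snd_pos neg_one_sq ht
      rw [h] at h₂
      linarith
  obtain ⟨G, hG, hGg⟩ := exists_isStringing_of_image (M := thetaT)
    (continuous_glue hb.1.ne' continuous_arc
      (continuous_glue hc.1.ne' continuous_seg continuous_arc (by norm_num))
      (by rw [glue_zero hc.1.le]; norm_num))
    (by rw [image_glue_Icc hb (by rw [glue_zero hc.1.le]; norm_num),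
      image_glue_Icc hc (by norm_num), image_seg_Icc (by norm_num), union_comm (segAt _ _),
      ← union_assoc, image_arc_union]; rfl)
    (injOn_glue hb (injOn_arc.mono Ioc_subset_Icc_self) hinj hdisj)
  refine ⟨G, hG, ?_, ?_, ?_⟩
  · simp only [hGg, Icc.coe_zero, glue_of_lt hba, ← hc_def, glue_self hc.1.ne', glue_zero hb.1.le]
    norm_num
  · simp only [hGg, Icc.coe_one, glue_one hb.2, glue_self hb.1.ne', glue_one hc.2]
    norm_num
  · simp only [ne_eq, hGg, Icc.coe_zero, Icc.coe_one, glue_one hb.2, glue_zero hb.1.le,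
      glue_one hc.2]
    norm_num

end Models

section Classification

variable {X : Type*} [TopologicalSpace X] [T2Space X] {F : I → X}

theorem nonempty_homeomorph_of_no_return (hF : IsStringing F) (h0 : ∀ x ∈ Ioo 0 1, F x ≠ F 0)
    (h1 : ∀ x ∈ Ioo 0 1, F x ≠ F 1) :
    Nonempty (X ≃ₜ unitSegT) ∨ Nonempty (X ≃ₜ circleT) := by
  by_cases h01 : F 0 = F 1
  · obtain ⟨G, hG, hG01, hG0⟩ := exists_isStringing_circle
    exact .inr <| nonempty_homeomorph_of_returns hF hG (iff_of_true h01 hG01)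
      (fun x hx => iff_of_false (h0 x hx) (hG0 x hx))
      (fun x hx => iff_of_false (h1 x hx) (hG01 ▸ hG0 x hx))
  · obtain ⟨G, hG, hGinj⟩ := exists_isStringing_unitSeg
    exact .inl <| nonempty_homeomorph_of_returns hF hG (iff_of_false h01 (hGinj.ne zero_ne_one))
      (fun x hx => iff_of_false (h0 x hx) (hGinj.ne (ne_of_gt hx.1)))
      (fun x hx => iff_of_false (h1 x hx) (hGinj.ne (ne_of_lt hx.2)))

theorem nonempty_homeomorph_of_return_zero (hF : IsStringing F) {a : I} (ha : a ∈ Ioo 0 1)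
    (hFa : F a = F 0) :
    Nonempty (X ≃ₜ lollipopT) ∨ Nonempty (X ≃ₜ figure8T) ∨ Nonempty (X ≃ₜ handcuffsT) ∨
      Nonempty (X ≃ₜ thetaT) := by
  by_cases h1 : ∀ x ∈ Ioo 0 1, F x ≠ F 1
  · obtain ⟨G, hG, hGa, hG01, hG1⟩ := exists_isStringing_lollipop ha
    exact .inl <| nonempty_homeomorph_of_returns hF hG
      (iff_of_false (fun h => h1 a ha (hFa.trans h)) hG01)
      (eq_iff_eq_of_injOn hF.injOn hG.injOn ha hFa hGa)
      (fun x hx => iff_of_false (h1 x hx) (hG1 x hx))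
  push Not at h1
  obtain ⟨b, hb, hFb⟩ := h1
  rcases lt_trichotomy a b with hab | rfl | hba
  · obtain ⟨G, hG, hGa, hGb, hG01⟩ := exists_isStringing_handcuffs ha hb hab
    exact .inr <| .inr <| .inl <| nonempty_homeomorph_of_returns hF hG
      (iff_of_false (fun h => hab.ne (hF.injOn ha hb (by rw [hFa, hFb, h]))) hG01)
      (eq_iff_eq_of_injOn hF.injOn hG.injOn ha hFa hGa)
      (eq_iff_eq_of_injOn hF.injOn hG.injOn hb hFb hGb)
  · obtain ⟨G, hG, hGa, hG01⟩ := exists_isStringing_figure8 ha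
    exact .inr <| .inl <| nonempty_homeomorph_of_returns hF hG
      (iff_of_true (hFa.symm.trans hFb) hG01)
      (eq_iff_eq_of_injOn hF.injOn hG.injOn ha hFa hGa)
      (eq_iff_eq_of_injOn hF.injOn hG.injOn ha hFb (hGa.trans hG01))
  · obtain ⟨G, hG, hGa, hGb, hG01⟩ := exists_isStringing_theta ha hb hba
    exact .inr <| .inr <| .inr <| nonempty_homeomorph_of_returns hF hG
      (iff_of_false (fun h => hba.ne (hF.injOn hb ha (by rw [hFa, hFb, h]))) hG01)
      (eq_iff_eq_of_injOn hF.injOn hG.injOn ha hFa hGa)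
      (eq_iff_eq_of_injOn hF.injOn hG.injOn hb hFb hGb)

end Classification

end StringableTangle

open StringableTangle in
/-- Every stringable tangle is homeomorphic to one of the six basic stringable
tangles: the unit interval, the circle, the lollipop, the figure 8, the handcuffs,
or the theta. -/
theorem stmt_1 (T : Type) [TopologicalSpace T] (hT : IsTangle T) (hS : Stringable T) :
    Nonempty (T ≃ₜ ↥unitSegT) ∨ Nonempty (T ≃ₜ ↥circleT) ∨ Nonempty (T ≃ₜ ↥lollipopT) ∨
    Nonempty (T ≃ₜ ↥figure8T) ∨ Nonempty (T ≃ₜ ↥handcuffsT) ∨ Nonempty (T ≃ₜ ↥thetaT) := by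
  obtain ⟨S, -, ⟨e⟩⟩ := hT
  have : T2Space T := e.isEmbedding.t2Space
  obtain ⟨F, hFc, hFs, hFi⟩ := hS
  have hF : IsStringing F := ⟨hFc, hFs, hFi⟩
  by_cases h0 : ∃ a ∈ Ioo (0 : I) 1, F a = F 0
  · obtain ⟨a, ha, hFa⟩ := h0
    exact .inr <| .inr <| nonempty_homeomorph_of_return_zero hF ha hFa
  by_cases h1 : ∃ b ∈ Ioo (0 : I) 1, F b = F 1
  · obtain ⟨b, hb, hFb⟩ := h1
    refine .inr <| .inr <| nonempty_homeomorph_of_return_zero hF.comp_symm (symm_mem_Ioo hb) ?_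
    simpa [symm_symm, symm_zero] using hFb
  push Not at h0 h1
  exact (nonempty_homeomorph_of_no_return hF h0 h1).imp_right .inl
end
end

section
/- Let T be a Hausdorff topological space, t ≥ 0 and k ≥ 2 integers, and X ⊆ T a set with exactly t elements such that T ∖ X has exactly t + k connected components D₁,…,D_{t+k}. Let n ≥ t + 1 be an integer and let μ be a Borel measure on T with μ(X) = 0, μ(D_j) = (t+1)/(t+k−1) for 1 ≤ j ≤ t+k−1, and μ(D_{t+k}) = n − t. Then no partition of T into n connected Borel subsets T₁,…,Tₙ is envy-free for n agents sharing the common valuation μ: in every such partition there exist indices i, j with μ(T_i) < μ(T_j). -/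
/-!
Suppose the partition were envy-free. The total measure is `(t + 1) + (n - t) = n + 1`, so
every piece has measure `(n + 1) / n > 1`. Pieces are disjoint, so at most `t` of them meet the
`t` points of `X`; each of the remaining `n - t` pieces is a preconnected subset of `T ∖ X`,
hence lies in a single component, and it cannot fit in a component of measure
`(t + 1) / (t + k - 1) ≤ 1`. So at least `n - t` pieces of measure `> 1` lie in the last
component, whose measure is only `n - t`.
-/

open MeasureTheory Set Finset Function
open scoped ENNReal

section Topology

variable {T : Type*} [TopologicalSpace T]

theorem closure_connectedComponentIn_inter (U : Set T) (x : T) :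
    closure (connectedComponentIn U x) ∩ U = connectedComponentIn U x := by
  by_cases hx : x ∈ U
  · have hsub : connectedComponentIn U x ⊆ closure (connectedComponentIn U x) ∩ U :=
      subset_inter subset_closure (connectedComponentIn_subset _ _)
    refine Subset.antisymm ?_ hsub
    exact (isPreconnected_connectedComponentIn.subset_closure hsub inter_subset_left)
      |>.subset_connectedComponentIn (hsub (mem_connectedComponentIn hx)) inter_subset_right
  · simp [connectedComponentIn_eq_empty hx]

theorem measurableSet_connectedComponentIn [MeasurableSpace T] [OpensMeasurableSpace T]
    {U : Set T} (hU : MeasurableSet U) (x : T) :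
    MeasurableSet (connectedComponentIn U x) := by
  rw [← closure_connectedComponentIn_inter]
  exact isClosed_closure.measurableSet.inter hU

theorem exists_subset_of_isPreconnected_of_forall_eq_connectedComponentIn {ι : Type*}
    {U A : Set T} {D : ι → Set T}
    (hD : ∀ j, ∃ x ∈ U, D j = connectedComponentIn U x) (hcover : ∀ x ∈ U, ∃ j, x ∈ D j)
    (hA : IsPreconnected A) (hAne : A.Nonempty) (hAU : A ⊆ U) : ∃ j, A ⊆ D j := by
  obtain ⟨x, hx⟩ := hAne
  obtain ⟨j, hj⟩ := hcover x (hAU hx)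
  obtain ⟨y, -, hDj⟩ := hD j
  refine ⟨j, ?_⟩
  rw [hDj] at hj ⊢
  exact connectedComponentIn_eq hj ▸ hA.subset_connectedComponentIn hx hAU

theorem iUnion_eq_of_forall_eq_connectedComponentIn {ι : Type*} {U : Set T} {D : ι → Set T}
    (hD : ∀ j, ∃ x ∈ U, D j = connectedComponentIn U x) (hcover : ∀ x ∈ U, ∃ j, x ∈ D j) :
    ⋃ j, D j = U := by
  refine Subset.antisymm (iUnion_subset fun j => ?_) fun x hx => mem_iUnion.2 (hcover x hx)
  obtain ⟨x, -, hDj⟩ := hD j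
  exact hDj ▸ connectedComponentIn_subset U x

end Topology

open scoped Classical in
theorem card_sub_ncard_le_card_filter_disjoint {ι α : Type*} [Fintype ι] {A : ι → Set α}
    (hA : Pairwise (Disjoint on A)) {X : Set α} (hX : X.Finite) :
    Fintype.card ι - X.ncard ≤ #{i | Disjoint (A i) X} := by
  have hmeet (i : {i // ¬Disjoint (A i) X}) : ∃ x, x ∈ A i ∧ x ∈ X := not_disjoint_iff.1 i.2
  choose f hfA hfX using hmeet
  have hle : #{i | ¬Disjoint (A i) X} ≤ X.ncard := by
    have : Finite X := hX
    rw [← Fintype.card_subtype, ← Nat.card_eq_fintype_card, ← Nat.card_coe_set_eq]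
    refine Nat.card_le_card_of_injective (fun i => ⟨f i, hfX i⟩) fun i j hij => ?_
    have hfij : f i = f j := congrArg Subtype.val hij
    by_contra hne
    exact Set.disjoint_left.1 (hA (Subtype.coe_injective.ne hne)) (hfA i) (hfij ▸ hfA j)
  have := card_filter_add_card_filter_not (s := univ) (fun i => Disjoint (A i) X)
  rw [card_univ] at this
  omega

section Measure

variable {α ι : Type*} [MeasurableSpace α] {μ : Measure α} {A : ι → Set α}

theorem card_mul_le_measure_of_subset (hA : Pairwise (Disjoint on A))
    (hAm : ∀ i, MeasurableSet (A i)) {S : Finset ι} {B : Set α} (hsub : ∀ i ∈ S, A i ⊆ B)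
    {c : ℝ≥0∞} (hc : ∀ i ∈ S, c ≤ μ (A i)) : #S * c ≤ μ B :=
  calc #S * c = ∑ i ∈ S, c := by rw [sum_const, nsmul_eq_mul]
    _ ≤ ∑ i ∈ S, μ (A i) := sum_le_sum hc
    _ = μ (⋃ i ∈ S, A i) :=
      (measure_biUnion_finset (fun i _ j _ hij => hA hij) fun i _ => hAm i).symm
    _ ≤ μ B := measure_mono (iUnion₂_subset hsub)

theorem measure_univ_eq_card_mul [Fintype ι] (hA : Pairwise (Disjoint on A))
    (hAm : ∀ i, MeasurableSet (A i)) (hcover : ⋃ i, A i = univ) {c : ℝ≥0∞}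
    (hc : ∀ i, μ (A i) = c) : μ univ = Fintype.card ι * c := by
  rw [← hcover, measure_iUnion hA hAm, tsum_fintype, sum_congr rfl fun i _ => hc i, sum_const,
    card_univ, nsmul_eq_mul]

end Measure

theorem ENNReal.sum_fin_eq_add_of_init_eq_div {N : ℕ} (hN : 2 ≤ N) (f : Fin N → ℝ≥0∞)
    (a b : ℝ≥0∞)
    (hf : ∀ j : Fin N, (j : ℕ) < N - 1 → f j = a / (N - 1 : ℕ))
    (hlast : ∀ j : Fin N, (j : ℕ) = N - 1 → f j = b) : ∑ j, f j = a + b := by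
  obtain ⟨m, rfl⟩ : ∃ m, N = m + 1 := ⟨N - 1, by omega⟩
  simp only [Nat.add_sub_cancel] at hf hlast
  rw [Fin.sum_univ_castSucc, hlast _ rfl, sum_congr rfl fun j _ => hf j.castSucc j.isLt,
    sum_const, card_univ, Fintype.card_fin, nsmul_eq_mul,
    ENNReal.mul_div_cancel (by simp; omega) (ENNReal.natCast_ne_top m)]

theorem ENNReal.one_lt_of_natCast_mul_eq {n : ℕ} {c : ℝ≥0∞} (h : n * c = (n + 1 : ℕ)) :
    1 < c := by
  by_contra! hc
  have : ((n + 1 : ℕ) : ℝ≥0∞) ≤ n := by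
    simpa [← h] using mul_le_mul_right hc (n : ℝ≥0∞)
  norm_cast at this
  omega

theorem ENNReal.natCast_lt_natCast_mul_of_le {m s : ℕ} {c : ℝ≥0∞} (hm : m ≠ 0) (hms : m ≤ s)
    (hc : 1 < c) : (m : ℝ≥0∞) < s * c :=
  calc (m : ℝ≥0∞) = m * 1 := (mul_one _).symm
    _ < m * c := (ENNReal.mul_lt_mul_iff_right (by exact_mod_cast hm) (natCast_ne_top m)).2 hc
    _ ≤ s * c := by gcongr

/-- Gap ≥ 2 Lemma (continuous version). Let `T` be a Hausdorff space, `X` a set of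
exactly `t` points whose removal leaves exactly `t + k` connected components
`D 0, …, D (t+k-1)` (with `k ≥ 2`), and let `μ` be a Borel measure giving `X` measure
zero, each of the first `t + k - 1` components measure `(t+1)/(t+k-1)`, and the last
component measure `n - t`, where `n ≥ t + 1`. Then no partition of `T` into `n`
connected Borel pieces is envy-free for `n` agents sharing the common valuation `μ`. -/
theorem stmt_4 (T : Type) [TopologicalSpace T] [T2Space T]
    [MeasurableSpace T] [BorelSpace T]
    (t k n : ℕ) (hk : 2 ≤ k) (hn : t + 1 ≤ n)
    (X : Set T) (hXfin : X.Finite) (hXcard : X.ncard = t)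
    (D : Fin (t + k) → Set T)
    (hDcomp : ∀ j, ∃ x ∈ Xᶜ, D j = connectedComponentIn Xᶜ x)
    (hDdisj : Pairwise fun i j => Disjoint (D i) (D j))
    (hDcover : ∀ x ∈ Xᶜ, ∃ j, x ∈ D j)
    (μ : Measure T)
    (hμX : μ X = 0)
    (hμD : ∀ j : Fin (t + k), (j : ℕ) < t + k - 1 →
      μ (D j) = ((t + 1 : ℕ) : ENNReal) / ((t + k - 1 : ℕ) : ENNReal))
    (hμlast : ∀ j : Fin (t + k), (j : ℕ) = t + k - 1 → μ (D j) = ((n - t : ℕ) : ENNReal)) :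
    ∀ A : Fin n → Set T,
      (∀ i, IsPreconnected (A i)) →
      (∀ i, MeasurableSet (A i)) →
      (Pairwise fun i j => Disjoint (A i) (A j)) →
      (⋃ i, A i) = Set.univ →
      ∃ i j, μ (A i) < μ (A j) := by
  intro A hAconn hAmeas hAdisj hAcover
  classical
  by_contra! henvy
  have hDmeas (j) : MeasurableSet (D j) := by
    obtain ⟨x, -, hDj⟩ := hDcomp j
    exact hDj ▸ measurableSet_connectedComponentIn hXfin.isClosed.isOpen_compl.measurableSet x
  have htotal : μ univ = (n + 1 : ℕ) := by
    rw [← measure_add_measure_compl hXfin.measurableSet, hμX, zero_add,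
      ← iUnion_eq_of_forall_eq_connectedComponentIn hDcomp hDcover, measure_iUnion hDdisj hDmeas,
      tsum_fintype, ENNReal.sum_fin_eq_add_of_init_eq_div (by omega) _ _ _ hμD hμlast]
    norm_cast
    omega
  set c := μ (A ⟨0, by omega⟩)
  have hAc (i) : μ (A i) = c := le_antisymm (henvy _ i) (henvy i _)
  have hc : 1 < c := ENNReal.one_lt_of_natCast_mul_eq (n := n) <| by
    rw [← htotal, measure_univ_eq_card_mul hAdisj hAmeas hAcover hAc, Fintype.card_fin]
  have hlast (i) (hiX : Disjoint (A i) X) : A i ⊆ D ⟨t + k - 1, by omega⟩ := by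
    obtain ⟨j, hj⟩ := exists_subset_of_isPreconnected_of_forall_eq_connectedComponentIn hDcomp
      hDcover (hAconn i) (nonempty_of_measure_ne_zero (hAc i ▸ (zero_lt_one.trans hc).ne'))
      (subset_compl_iff_disjoint_right.2 hiX)
    suffices (j : ℕ) = t + k - 1 by rwa [show j = ⟨t + k - 1, _⟩ from Fin.ext this] at hj
    by_contra hjL
    have hsmall : μ (D j) ≤ 1 := by
      rw [hμD j (by omega)]
      refine ENNReal.div_le_of_le_mul ?_
      rw [one_mul]
      exact_mod_cast (by omega : t + 1 ≤ t + k - 1)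
    exact (hc.trans_le ((hAc i).symm.trans_le (measure_mono hj))).not_ge hsmall
  have hcount := card_sub_ncard_le_card_filter_disjoint hAdisj hXfin
  rw [Fintype.card_fin, hXcard] at hcount
  have hfit := card_mul_le_measure_of_subset hAdisj hAmeas (S := {i | Disjoint (A i) X})
    (fun i hi => hlast i (mem_filter.1 hi).2) (fun i _ => (hAc i).ge)
  rw [hμlast _ rfl] at hfit
  exact (ENNReal.natCast_lt_natCast_mul_of_le (by omega) hcount hc).not_ge hfit
end

section
/- Let G = (V,E) be a finite simple graph, k ≥ 1 and n, t integers with n ≥ t + 1, and X ⊆ V with |X| = t. Suppose the graph G − X (the subgraph induced on V ∖ X) has at least t + 2 connected components and every connected component of G − X has more than k·n·(n − t) vertices. Then there is a weight function w : V → [0,∞) such that, when all n agents use the common additive valuation ν(S) = Σ_{v∈S} w(v), every contiguous allocation A₁,…,Aₙ fails to be envy-free up to k goods: there exist agents i, j such that ν(A_i) < ν(A_j ∖ S) for every S ⊆ A_j with |S| ≤ k. In particular, no contiguous allocation is EFk_outer. -/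
open Finset

/-!
Spread weight `n(n - t)` uniformly over one component `C₁` of `G - X` and weight `n` uniformly
over `t + 1` further components. The total is `n(n + 1)` and, the components being large, any `k`
goods are worth less than `1`. In an EFk allocation some bundle is worth at least the average
`n + 1`, so every bundle is worth more than `n`. A bundle avoiding `X` lies in a single component
of `G - X`, which must then be `C₁`. At most `t` bundles meet `X`, so at least `n - t` disjoint
bundles, each worth more than `n`, lie inside `C₁`, whose total worth is only `n(n - t)`.
-/

/-- `C` is a connected component of the subgraph of `G` induced on `s`:
a maximal subset of `s` inducing a connected subgraph. -/
def IsCompOf {V : Type} (G : SimpleGraph V) (s C : Set V) : Prop :=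
  C.Nonempty ∧ C ⊆ s ∧ (G.induce C).Connected ∧
  ∀ D : Set V, C ⊆ D → D ⊆ s → (G.induce D).Connected → D = C

namespace IsCompOf

variable {V : Type} {G : SimpleGraph V} {s C D : Set V}

theorem eq_or_disjoint (hC : IsCompOf G s C) (hD : IsCompOf G s D) : C = D ∨ Disjoint C D := by
  refine or_iff_not_imp_right.2 fun h => ?_
  have hCD : (G.induce (C ∪ D)).Connected := SimpleGraph.induce_union_connected
    hC.2.2.1.preconnected hD.2.2.1.preconnected (Set.not_disjoint_iff_nonempty_inter.1 h)
  have hsub : C ∪ D ⊆ s := Set.union_subset hC.2.1 hD.2.1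
  exact (hC.2.2.2 _ Set.subset_union_left hsub hCD).symm.trans
    (hD.2.2.2 _ Set.subset_union_right hsub hCD)

theorem exists_superset [Finite V] {B : Set V} (hBs : B ⊆ s) (hB : (G.induce B).Connected) :
    ∃ C, IsCompOf G s C ∧ B ⊆ C := by
  obtain ⟨C, ⟨hBC, hCs, hC⟩, hmax⟩ := Set.Finite.exists_maximalFor Set.ncard
    {D | B ⊆ D ∧ D ⊆ s ∧ (G.induce D).Connected} (Set.toFinite _) ⟨B, subset_rfl, hBs, hB⟩
  refine ⟨C, ⟨?_, hCs, hC, fun D hCD hDs hD => ?_⟩, hBC⟩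
  · obtain ⟨⟨x, hx⟩⟩ := hB.nonempty
    exact ⟨x, hBC hx⟩
  · exact (Set.eq_of_subset_of_ncard_le hCD
      (hmax ⟨hBC.trans hCD, hDs, hD⟩ (Set.ncard_le_ncard hCD)) (Set.toFinite _)).symm

end IsCompOf

theorem Set.exists_finset_card_eq_of_le_ncard {V : Type*} [Finite V] {𝒮 : Set (Set V)} {m : ℕ}
    (h : m ≤ 𝒮.ncard) : ∃ F : Finset (Finset V), #F = m ∧ ∀ D ∈ F, (D : Set V) ∈ 𝒮 := by
  have hpre : ((↑) ⁻¹' 𝒮 : Set (Finset V)).ncard = 𝒮.ncard :=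
    Set.ncard_preimage_of_injective_subset_range Finset.coe_injective
      fun S _ => ⟨S.toFinite.toFinset, by simp⟩
  obtain ⟨𝒯, h𝒯, h𝒯m⟩ := Set.exists_subset_card_eq (hpre ▸ h)
  exact ⟨𝒯.toFinite.toFinset, by rw [← h𝒯m, Set.ncard_eq_toFinset_card],
    fun D hD => h𝒯 ((Set.Finite.mem_toFinset _).1 hD)⟩

section Spread

variable {V : Type*} [DecidableEq V]

noncomputable def spread (F : Finset (Finset V)) (val : Finset V → ℝ) (v : V) : ℝ :=
  ∑ D ∈ F, if v ∈ D then val D / #D else 0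

variable {F : Finset (Finset V)} {val : Finset V → ℝ}

theorem spread_nonneg (hval : ∀ D ∈ F, 0 ≤ val D) (v : V) : 0 ≤ spread F val v :=
  sum_nonneg fun D hD => by split_ifs <;> positivity [hval D hD]

theorem sum_spread (s : Finset V) :
    ∑ x ∈ s, spread F val x = ∑ D ∈ F, #(s ∩ D) * (val D / #D) := by
  simp only [spread]
  rw [sum_comm]
  simp only [sum_ite_mem, sum_const, nsmul_eq_mul]

theorem sum_spread_of_mem (hF : (F : Set (Finset V)).Pairwise Disjoint) {C : Finset V}
    (hC : C ∈ F) (hCne : C.Nonempty) : ∑ x ∈ C, spread F val x = val C := by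
  rw [sum_spread, sum_eq_single_of_mem C hC fun D hD hDC => ?_]
  · rw [inter_self, mul_div_cancel₀ _ (by exact_mod_cast hCne.card_pos.ne')]
  · rw [disjoint_iff_inter_eq_empty.1 (hF hC hD hDC.symm), card_empty, Nat.cast_zero, zero_mul]

theorem sum_spread_eq_zero {s : Finset V} (hs : ∀ D ∈ F, Disjoint s D) :
    ∑ x ∈ s, spread F val x = 0 := by
  rw [sum_spread]
  exact sum_eq_zero fun D hD => by simp [disjoint_iff_inter_eq_empty.1 (hs D hD)]

theorem sum_univ_spread [Fintype V] (hne : ∀ D ∈ F, D.Nonempty) :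
    ∑ x, spread F val x = ∑ D ∈ F, val D := by
  rw [sum_spread]
  exact sum_congr rfl fun D hD => by
    rw [univ_inter, mul_div_cancel₀ _ (by exact_mod_cast (hne D hD).card_pos.ne')]

theorem spread_eq_zero_or (hF : (F : Set (Finset V)).Pairwise Disjoint) (v : V) :
    spread F val v = 0 ∨ ∃ D ∈ F, spread F val v = val D / #D := by
  by_cases h : ∃ D ∈ F, v ∈ D
  · obtain ⟨D, hD, hvD⟩ := h
    refine Or.inr ⟨D, hD, ?_⟩
    rw [spread, sum_eq_single_of_mem D hD fun E hE hED => if_neg fun hvE =>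
      disjoint_left.1 (hF hE hD hED) hvE hvD, if_pos hvD]
  · push Not at h
    exact Or.inl (sum_eq_zero fun D hD => if_neg (h D hD))

theorem mul_spread_lt_one {k : ℕ} (hF : (F : Set (Finset V)).Pairwise Disjoint)
    (hval : ∀ D ∈ F, 0 ≤ val D) (hlt : ∀ D ∈ F, k * val D < #D) (v : V) :
    k * spread F val v < 1 := by
  rcases spread_eq_zero_or (val := val) hF v with h | ⟨D, hD, h⟩
  · simp [h]
  have hDpos : (0 : ℝ) < #D := (mul_nonneg k.cast_nonneg (hval D hD)).trans_lt (hlt D hD)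
  rw [h, mul_div_assoc', div_lt_one hDpos]
  exact hlt D hD

end Spread

theorem exists_weight_of_components {V : Type} [Fintype V] [DecidableEq V] {G : SimpleGraph V}
    {k n t : ℕ} (hn : t + 1 ≤ n) {X : Finset V} {F : Finset (Finset V)}
    (hF : ∀ D ∈ F, IsCompOf G (↑X)ᶜ ↑D) (hFcard : #F = t + 2)
    (hbig : ∀ D ∈ F, k * n * (n - t) < #D) :
    ∃ (w : V → ℝ) (C₁ : Finset V), (∀ x, 0 ≤ w x) ∧ (∀ x, k * w x < 1) ∧
      n * (n + 1) ≤ ∑ x, w x ∧ ∑ x ∈ C₁, w x ≤ n * (n - t) ∧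
      ∀ C : Finset V, IsCompOf G (↑X)ᶜ ↑C → C ≠ C₁ → ∑ x ∈ C, w x ≤ n := by
  have hFne : ∀ D ∈ F, D.Nonempty := fun D hD => coe_nonempty.1 (hF D hD).1
  have hFdisj : (F : Set (Finset V)).Pairwise Disjoint := fun C hC D hD hCD =>
    disjoint_coe.1 (((hF C hC).eq_or_disjoint (hF D hD)).resolve_left (coe_injective.ne hCD))
  obtain ⟨C₁, hC₁⟩ : F.Nonempty := card_pos.1 (by omega)
  have htn : (t : ℝ) + 1 ≤ n := by exact_mod_cast hn
  let val : Finset V → ℝ := fun D => if D = C₁ then n * (n - t) else n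
  have hval : ∀ D, 0 ≤ val D ∧ val D ≤ n * (n - t) := fun D => by
    by_cases hD : D = C₁ <;> simp only [val, hD, if_true, if_false] <;> constructor <;> nlinarith
  refine ⟨spread F val, C₁, spread_nonneg fun D _ => (hval D).1,
    mul_spread_lt_one hFdisj (fun D _ => (hval D).1) fun D hD => ?_, ?_, ?_, ?_⟩
  · have hkD : ((k * n * (n - t) : ℕ) : ℝ) < #D := by exact_mod_cast hbig D hD
    push_cast [Nat.cast_sub (by omega : t ≤ n)] at hkD
    nlinarith [(hval D).2]
  · rw [sum_univ_spread hFne, ← add_sum_erase F val hC₁,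
      sum_congr rfl fun D hD => if_neg (ne_of_mem_erase hD), sum_const, card_erase_of_mem hC₁,
      hFcard]
    simp only [val, if_true, nsmul_eq_mul]
    push_cast
    nlinarith
  · rw [sum_spread_of_mem hFdisj hC₁ (hFne C₁ hC₁)]
    exact (hval C₁).2
  · intro C hC hCC₁
    by_cases hCF : C ∈ F
    · rw [sum_spread_of_mem hFdisj hCF (hFne C hCF)]
      simp [val, hCC₁]
    · rw [sum_spread_eq_zero fun D hD => disjoint_coe.1
        ((hC.eq_or_disjoint (hF D hD)).resolve_left fun h => hCF (coe_injective h ▸ hD))]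
      positivity

section Allocation

variable {V ι : Type*}

theorem sum_lt_one_of_card_le {k : ℕ} {w : V → ℝ} (hw : ∀ x, k * w x < 1) {S : Finset V}
    (hS : #S ≤ k) : ∑ x ∈ S, w x < 1 := by
  obtain rfl | hSne := S.eq_empty_or_nonempty
  · simp
  have hk : (k : ℝ) * ∑ x ∈ S, w x < k * 1 := calc
    (k : ℝ) * ∑ x ∈ S, w x = ∑ x ∈ S, k * w x := mul_sum _ _ _
    _ < ∑ x ∈ S, 1 := sum_lt_sum_of_nonempty hSne fun x _ => hw x
    _ ≤ k * 1 := by simpa using hS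
  exact lt_of_mul_lt_mul_left hk k.cast_nonneg

variable [DecidableEq V]

theorem lt_sum_of_envyFreeUpTo {A : ι → Finset V} {w : V → ℝ} {k : ℕ} {m : ℝ} {j : ι}
    (hw : ∀ x, k * w x < 1) (hj : m + 1 ≤ ∑ x ∈ A j, w x)
    (hef : ∀ i, ∃ S ⊆ A j, #S ≤ k ∧ ∑ x ∈ A j \ S, w x ≤ ∑ x ∈ A i, w x) (i : ι) :
    m < ∑ x ∈ A i, w x := by
  obtain ⟨S, hSA, hSk, hS⟩ := hef i
  rw [sum_sdiff_eq_sub hSA] at hS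
  linarith [sum_lt_one_of_card_le hw hSk]

theorem card_filter_not_disjoint_le [Fintype ι] {A : ι → Finset V}
    (hA : Pairwise fun i j => Disjoint (A i) (A j)) (X : Finset V) :
    #{i | ¬Disjoint (A i) X} ≤ #X := by
  set P : Finset ι := {i | ¬Disjoint (A i) X}
  calc #P = ∑ i ∈ P, 1 := card_eq_sum_ones P
    _ ≤ ∑ i ∈ P, #(A i ∩ X) := sum_le_sum fun i hi =>
        card_pos.2 (not_disjoint_iff_nonempty_inter.1 (mem_filter.1 hi).2)
    _ = #(P.biUnion fun i => A i ∩ X) :=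
        (card_biUnion fun i _ j _ hij => (hA hij).mono inter_subset_left inter_subset_left).symm
    _ ≤ #X := card_le_card (biUnion_subset.2 fun i _ => inter_subset_right)

theorem sum_sum_le_of_forall_subset {A : ι → Finset V}
    (hA : Pairwise fun i j => Disjoint (A i) (A j)) {w : V → ℝ} (hw : ∀ x, 0 ≤ w x)
    {Q : Finset ι} {C : Finset V} (hQ : ∀ i ∈ Q, A i ⊆ C) :
    ∑ i ∈ Q, ∑ x ∈ A i, w x ≤ ∑ x ∈ C, w x := by
  rw [← sum_biUnion fun i _ j _ hij => hA hij]
  exact sum_le_sum_of_subset_of_nonneg (biUnion_subset.2 hQ) fun x _ _ => hw x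

end Allocation

theorem subset_of_lt_sum_of_isCompOf {V : Type} [Finite V] {G : SimpleGraph V}
    {X B C₁ : Finset V} {w : V → ℝ} {m : ℝ} (hw : ∀ x, 0 ≤ w x)
    (hcomp : ∀ C : Finset V, IsCompOf G (↑X)ᶜ ↑C → C ≠ C₁ → ∑ x ∈ C, w x ≤ m)
    (hBX : Disjoint B X) (hB : (G.induce (B : Set V)).Preconnected) (hlt : m < ∑ x ∈ B, w x) :
    B ⊆ C₁ := by
  obtain rfl | hBne := B.eq_empty_or_nonempty
  · exact empty_subset _
  have := hBne.coe_sort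
  obtain ⟨C, hC, hBC⟩ := IsCompOf.exists_superset (G := G) (s := (↑X)ᶜ) (B := ↑B)
    (fun x hx => disjoint_left.1 hBX hx) ⟨hB⟩
  lift C to Finset V using C.toFinite
  rw [coe_subset] at hBC
  by_contra hBC₁
  have hCC₁ : C ≠ C₁ := fun h => hBC₁ (h ▸ hBC)
  linarith [hcomp C hC hCC₁, sum_le_sum_of_subset_of_nonneg hBC fun x _ _ => hw x]

theorem exists_envy_of_weight {V : Type} [Fintype V] [DecidableEq V] {G : SimpleGraph V}
    {k n t : ℕ} (hn : t + 1 ≤ n) {X C₁ : Finset V} (hX : #X = t) {w : V → ℝ}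
    (hw0 : ∀ x, 0 ≤ w x) (hw : ∀ x, k * w x < 1) (htotal : n * (n + 1) ≤ ∑ x, w x)
    (hC₁ : ∑ x ∈ C₁, w x ≤ n * (n - t))
    (hcomp : ∀ C : Finset V, IsCompOf G (↑X)ᶜ ↑C → C ≠ C₁ → ∑ x ∈ C, w x ≤ n)
    (A : Fin n → Finset V) (hA : Pairwise fun i j => Disjoint (A i) (A j))
    (hcover : univ.biUnion A = univ) (hconn : ∀ i, (G.induce (A i : Set V)).Preconnected) :
    ∃ i j, ∀ S : Finset V, S ⊆ A j → #S ≤ k → ∑ x ∈ A i, w x < ∑ x ∈ A j \ S, w x := by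
  by_contra! hef
  have : NeZero n := ⟨by omega⟩
  obtain ⟨j, -, hj⟩ : ∃ j ∈ univ, (n : ℝ) + 1 ≤ ∑ x ∈ A j, w x := by
    refine exists_le_of_sum_le univ_nonempty ?_
    rwa [← sum_biUnion fun i _ j _ hij => hA hij, hcover, sum_const, card_univ,
      Fintype.card_fin, nsmul_eq_mul]
  have hrich := lt_sum_of_envyFreeUpTo hw hj fun i => hef i j
  have hQ : n - t ≤ #{i | Disjoint (A i) X} := by
    have hdirty := card_filter_not_disjoint_le hA X
    have hsplit := card_filter_add_card_filter_not (s := univ) fun i => Disjoint (A i) X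
    rw [card_univ, Fintype.card_fin] at hsplit
    omega
  set Q : Finset (Fin n) := {i | Disjoint (A i) X}
  have hQsub : ∀ i ∈ Q, A i ⊆ C₁ := fun i hi =>
    subset_of_lt_sum_of_isCompOf hw0 hcomp (mem_filter.1 hi).2 (hconn i) (hrich i)
  have hQ' : (n : ℝ) - t ≤ #Q := by rw [← Nat.cast_sub (by omega)]; exact_mod_cast hQ
  have hlt := sum_lt_sum_of_nonempty (card_pos.1 (by omega)) fun i (_ : i ∈ Q) => hrich i
  rw [sum_const, nsmul_eq_mul] at hlt
  nlinarith [sum_sum_le_of_forall_subset hA hw0 hQsub]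

theorem stmt_5_general {V : Type} [Fintype V] [DecidableEq V] (G : SimpleGraph V)
    (k n t : ℕ) (hn : t + 1 ≤ n)
    (X : Finset V) (hX : X.card = t)
    (hcomps : t + 2 ≤ {C : Set V | IsCompOf G ((↑X : Set V)ᶜ) C}.ncard)
    (hbig : ∀ C : Set V, IsCompOf G ((↑X : Set V)ᶜ) C → k * n * (n - t) < C.ncard) :
    ∃ w : V → ℝ, (∀ v, 0 ≤ w v) ∧
      ∀ A : Fin n → Finset V,
        (Pairwise fun i j => Disjoint (A i) (A j)) →
        Finset.univ.biUnion A = Finset.univ →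
        (∀ i, (G.induce ((A i : Finset V) : Set V)).Preconnected) →
        ∃ i j, ∀ S : Finset V, S ⊆ A j → S.card ≤ k →
          ∑ x ∈ A i, w x < ∑ x ∈ A j \ S, w x := by
  obtain ⟨F, hFcard, hF⟩ := Set.exists_finset_card_eq_of_le_ncard hcomps
  obtain ⟨w, C₁, hw0, hw, htotal, hC₁, hcomp⟩ := exists_weight_of_components hn hF hFcard
    fun D hD => Set.ncard_coe_finset D ▸ hbig D (hF D hD)
  exact ⟨w, hw0, exists_envy_of_weight hn hX hw0 hw htotal hC₁ hcomp⟩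

/-- Gap ≥ 2 Lemma (discrete version). If removing a `t`-element set `X` of vertices
from `G` leaves at least `t + 2` connected components, each with more than
`k·n·(n − t)` vertices, then for `n ≥ t + 1` agents there is a common additive
valuation for which every contiguous allocation fails to be envy-free up to `k`
goods (hence fails EFk-outer). -/
theorem stmt_5 {V : Type} [Fintype V] [DecidableEq V] (G : SimpleGraph V)
    (k n t : ℕ) (hk : 1 ≤ k) (hn : t + 1 ≤ n)
    (X : Finset V) (hX : X.card = t)
    (hcomps : t + 2 ≤ {C : Set V | IsCompOf G ((↑X : Set V)ᶜ) C}.ncard)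
    (hbig : ∀ C : Set V, IsCompOf G ((↑X : Set V)ᶜ) C → k * n * (n - t) < C.ncard) :
    ∃ w : V → ℝ, (∀ v, 0 ≤ w v) ∧
      ∀ A : Fin n → Finset V,
        (Pairwise fun i j => Disjoint (A i) (A j)) →
        Finset.univ.biUnion A = Finset.univ →
        (∀ i, (G.induce ((A i : Finset V) : Set V)).Preconnected) →
        ∃ i j, ∀ S : Finset V, S ⊆ A j → S.card ≤ k →
          ∑ x ∈ A i, w x < ∑ x ∈ A j \ S, w x :=
  stmt_5_general G k n t hn X hX hcomps hbig
end

section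
/- Fix integers k ≥ 1 and n ≥ 4. Let G be a lips graph in which each of the five defining paths has more than k·n·(n−3) internal vertices. Then G fails to guarantee EFk_outer allocations for n agents: there exists a weight function w on the vertices of G such that, when all n agents use the common additive valuation ν(S) = Σ_{v∈S} w(v), no contiguous allocation A₁,…,Aₙ is envy-free up to k goods, and hence none is EFk_outer. -/
/-- The internal vertices of a walk: vertices on its support other than its endpoints. -/
def walkInternals {V : Type} {G : SimpleGraph V} {x y : V} (p : G.Walk x y) : Set V :=
  {v | v ∈ p.support} \ {x, y}

/-- The set of edges traversed by a walk. -/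
def walkEdgeSet {V : Type} {G : SimpleGraph V} {x y : V} (p : G.Walk x y) : Set (Sym2 V) :=
  {e | e ∈ p.edges}

/-- The five paths `p1, p2 : a — b`, `p3, p4 : b — c`, `p5 : a — c` witness that `G` is a
lips graph with distinguished vertices `a`, `b`, `c`. -/
def LipsWitness {V : Type} (G : SimpleGraph V) (a b c : V)
    (p1 p2 : G.Walk a b) (p3 p4 : G.Walk b c) (p5 : G.Walk a c) : Prop :=
  a ≠ b ∧ a ≠ c ∧ b ≠ c ∧
  (p1.IsPath ∧ p2.IsPath ∧ p3.IsPath ∧ p4.IsPath ∧ p5.IsPath) ∧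
  (p1 ≠ p2 ∧ p3 ≠ p4) ∧
  (Disjoint (walkInternals p1) (walkInternals p2) ∧
   Disjoint (walkInternals p1) (walkInternals p3) ∧
   Disjoint (walkInternals p1) (walkInternals p4) ∧
   Disjoint (walkInternals p1) (walkInternals p5) ∧
   Disjoint (walkInternals p2) (walkInternals p3) ∧
   Disjoint (walkInternals p2) (walkInternals p4) ∧
   Disjoint (walkInternals p2) (walkInternals p5) ∧
   Disjoint (walkInternals p3) (walkInternals p4) ∧
   Disjoint (walkInternals p3) (walkInternals p5) ∧
   Disjoint (walkInternals p4) (walkInternals p5)) ∧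
  (Disjoint (walkInternals p1) ({a, b, c} : Set V) ∧
   Disjoint (walkInternals p2) ({a, b, c} : Set V) ∧
   Disjoint (walkInternals p3) ({a, b, c} : Set V) ∧
   Disjoint (walkInternals p4) ({a, b, c} : Set V) ∧
   Disjoint (walkInternals p5) ({a, b, c} : Set V)) ∧
  (Disjoint (walkEdgeSet p1) (walkEdgeSet p2) ∧
   Disjoint (walkEdgeSet p1) (walkEdgeSet p3) ∧
   Disjoint (walkEdgeSet p1) (walkEdgeSet p4) ∧
   Disjoint (walkEdgeSet p1) (walkEdgeSet p5) ∧
   Disjoint (walkEdgeSet p2) (walkEdgeSet p3) ∧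
   Disjoint (walkEdgeSet p2) (walkEdgeSet p4) ∧
   Disjoint (walkEdgeSet p2) (walkEdgeSet p5) ∧
   Disjoint (walkEdgeSet p3) (walkEdgeSet p4) ∧
   Disjoint (walkEdgeSet p3) (walkEdgeSet p5) ∧
   Disjoint (walkEdgeSet p4) (walkEdgeSet p5)) ∧
  (walkEdgeSet p1 ∪ walkEdgeSet p2 ∪ walkEdgeSet p3 ∪ walkEdgeSet p4 ∪ walkEdgeSet p5 =
    G.edgeSet) ∧
  (∀ v : V, v ∈ p1.support ∨ v ∈ p2.support ∨ v ∈ p3.support ∨ v ∈ p4.support ∨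
    v ∈ p5.support)

/-!
Put mass `n - 3` uniformly on the interior of `P₁`, mass `1` uniformly on the interior of each
other path, and nothing on `a`, `b`, `c`. The total is `n + 1` and every vertex weighs less than
`1 / (k n)`, so in an EFk allocation every agent gets more than `1`. At most three bundles
contain one of `a`, `b`, `c`; each of the other (at least `n - 3`) bundles is connected and avoids
them, hence lies inside one path interior, and that must be the interior of `P₁` because the others
are worth only `1`. Together these bundles are then worth more than `n - 3`, the mass of `P₁`.
-/

open Finset Function

section

variable {V : Type}

section WalkInternals

variable [DecidableEq V] {G : SimpleGraph V} {x y : V}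

def walkInternalsFinset (p : G.Walk x y) : Finset V :=
  p.support.toFinset \ {x, y}

theorem coe_walkInternalsFinset (p : G.Walk x y) :
    (walkInternalsFinset p : Set V) = walkInternals p := by
  ext v
  simp [walkInternalsFinset, walkInternals]

theorem ncard_walkInternals (p : G.Walk x y) :
    (walkInternals p).ncard = #(walkInternalsFinset p) := by
  rw [← coe_walkInternalsFinset, Set.ncard_coe_finset]

theorem mem_walkInternalsFinset_of_mem_support {H : Finset V} (hx : x ∈ H) (hy : y ∈ H)
    {p : G.Walk x y} {v : V} (hv : v ∈ p.support) (hvH : v ∉ H) :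
    v ∈ walkInternalsFinset p := by
  simp only [walkInternalsFinset, mem_sdiff, List.mem_toFinset, mem_insert, mem_singleton]
  exact ⟨hv, by rintro (rfl | rfl) <;> contradiction⟩

theorem mem_walkInternalsFinset_of_mem_edges {H : Finset V} (hx : x ∈ H) (hy : y ∈ H)
    {p : G.Walk x y} {u v : V} (he : s(u, v) ∈ p.edges) (hu : u ∉ H) (hv : v ∉ H) :
    u ∈ walkInternalsFinset p ∧ v ∈ walkInternalsFinset p :=
  ⟨mem_walkInternalsFinset_of_mem_support hx hy (p.fst_mem_support_of_mem_edges he) hu,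
    mem_walkInternalsFinset_of_mem_support hx hy (p.snd_mem_support_of_mem_edges he) hv⟩

end WalkInternals

theorem subset_of_induce_preconnected {G : SimpleGraph V} {B X : Set V}
    (hB : (G.induce B).Preconnected) {v : V} (hvB : v ∈ B) (hvX : v ∈ X)
    (hX : ∀ x y, G.Adj x y → x ∈ B → y ∈ B → x ∈ X → y ∈ X) :
    B ⊆ X := by
  intro u huB
  by_contra huX
  obtain ⟨p⟩ := hB ⟨v, hvB⟩ ⟨u, huB⟩
  obtain ⟨d, -, hd, hd'⟩ := p.exists_boundary_dart {z | (z : V) ∈ X} hvX huX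
  exact hd' (hX _ _ d.adj d.fst.2 d.snd.2 hd)

section SpreadWeight

variable {ι : Type*} [Fintype ι] [DecidableEq V] (R : ι → Finset V) (m : ι → ℝ)

noncomputable def spreadWeight (v : V) : ℝ :=
  ∑ i, if v ∈ R i then m i / #(R i) else 0

variable {R m}

theorem spreadWeight_nonneg (hm : ∀ i, 0 ≤ m i) (v : V) : 0 ≤ spreadWeight R m v :=
  sum_nonneg fun i _ => by
    split_ifs
    exacts [div_nonneg (hm i) (Nat.cast_nonneg _), le_rfl]

theorem spreadWeight_eq_of_mem (hR : Pairwise (Disjoint on R)) {i : ι} {v : V} (hv : v ∈ R i) :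
    spreadWeight R m v = m i / #(R i) := by
  rw [spreadWeight, sum_eq_single i (fun j _ hji => if_neg ?_) (by simp), if_pos hv]
  exact disjoint_right.mp (hR hji) hv

theorem spreadWeight_le (hR : Pairwise (Disjoint on R)) {δ : ℝ} (hδ : 0 ≤ δ)
    (hmδ : ∀ i, m i / #(R i) ≤ δ) (v : V) : spreadWeight R m v ≤ δ := by
  by_cases hv : ∃ i, v ∈ R i
  · obtain ⟨i, hvi⟩ := hv
    exact (spreadWeight_eq_of_mem hR hvi).trans_le (hmδ i)
  · simpa [spreadWeight, not_exists.mp hv] using hδ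

theorem sum_spreadWeight [Fintype V] (hne : ∀ i, (R i).Nonempty) :
    ∑ v, spreadWeight R m v = ∑ i, m i := by
  simp only [spreadWeight]
  rw [sum_comm]
  refine sum_congr rfl fun i _ => ?_
  rw [Fintype.sum_ite_mem, sum_const, nsmul_eq_mul,
    mul_div_cancel₀ _ (by simp [(hne i).ne_empty])]

theorem sum_spreadWeight_le_of_subset (hR : Pairwise (Disjoint on R)) (hm : ∀ i, 0 ≤ m i)
    (hne : ∀ i, (R i).Nonempty) {B : Finset V} {i : ι} (hB : B ⊆ R i) :
    ∑ v ∈ B, spreadWeight R m v ≤ m i :=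
  calc ∑ v ∈ B, spreadWeight R m v
      ≤ ∑ v ∈ R i, spreadWeight R m v :=
        sum_le_sum_of_subset_of_nonneg hB fun v _ _ => spreadWeight_nonneg hm v
    _ = ∑ _v ∈ R i, m i / #(R i) := sum_congr rfl fun v hv => spreadWeight_eq_of_mem hR hv
    _ = m i := by
        rw [sum_const, nsmul_eq_mul, mul_div_cancel₀ _ (by simp [(hne i).ne_empty])]

theorem sum_spreadWeight_update_one [Fintype V] [DecidableEq ι] (hne : ∀ i, (R i).Nonempty)
    (i₀ : ι) (d : ℝ) :
    ∑ v, spreadWeight R (update 1 i₀ d) v = d + (Fintype.card ι - 1 : ℕ) := by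
  rw [sum_spreadWeight hne, sum_update_of_mem (mem_univ i₀)]
  simp [card_sdiff_of_subset (singleton_subset_iff.mpr (mem_univ i₀))]

end SpreadWeight

section FairDivision

variable [DecidableEq V]

def IsEFk {α : Type*} (k : ℕ) (w : V → ℝ) (A : α → Finset V) : Prop :=
  ∀ i j, ∃ S ⊆ A j, #S ≤ k ∧ ∑ x ∈ A j \ S, w x ≤ ∑ x ∈ A i, w x

theorem IsEFk.sum_sub_le {α : Type*} {k : ℕ} {w : V → ℝ} {A : α → Finset V} (hA : IsEFk k w A)
    {δ : ℝ} (hδ : 0 ≤ δ) (hw : ∀ v, w v ≤ δ) (i j : α) :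
    ∑ x ∈ A j, w x - k * δ ≤ ∑ x ∈ A i, w x := by
  obtain ⟨S, hSA, hSk, hle⟩ := hA i j
  have hS : ∑ x ∈ S, w x ≤ k * δ :=
    calc ∑ x ∈ S, w x ≤ #S * δ := by simpa using sum_le_card_nsmul S w δ fun x _ => hw x
      _ ≤ k * δ := by gcongr
  rw [sum_sdiff_eq_sub hSA] at hle
  linarith

theorem IsEFk.sum_div_sub_le [Fintype V] {n k : ℕ} {w : V → ℝ} {A : Fin n → Finset V}
    (hA : IsEFk k w A) (hdisj : Pairwise (Disjoint on A)) (hcover : univ.biUnion A = univ)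
    {δ : ℝ} (hδ : 0 ≤ δ) (hw : ∀ v, w v ≤ δ) (i : Fin n) :
    (∑ v, w v) / n - k * δ ≤ ∑ x ∈ A i, w x := by
  have hn : (0 : ℝ) < n := by exact_mod_cast i.pos
  have htot : ∑ j, ∑ x ∈ A j, w x = ∑ v, w v := by
    rw [← sum_biUnion fun j _ l _ hjl => hdisj hjl, hcover]
  obtain ⟨j, -, hj⟩ : ∃ j ∈ univ, (∑ v, w v) / n ≤ ∑ x ∈ A j, w x := by
    refine exists_le_of_sum_le ⟨i, mem_univ i⟩ ?_
    rw [htot, sum_const, card_univ, Fintype.card_fin, nsmul_eq_mul, mul_div_cancel₀ _ hn.ne']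
  linarith [hA.sum_sub_le hδ hw i j]

theorem IsEFk.one_lt_sum [Fintype V] {n k : ℕ} {w : V → ℝ} {A : Fin n → Finset V}
    (hA : IsEFk k w A) (hdisj : Pairwise (Disjoint on A)) (hcover : univ.biUnion A = univ)
    {δ : ℝ} (hδ : 0 ≤ δ) (hw : ∀ v, w v ≤ δ) (hkδ : n * k * δ < 1)
    (htot : n + 1 ≤ ∑ v, w v) (i : Fin n) : 1 < ∑ x ∈ A i, w x := by
  have hn : (0 : ℝ) < n := by exact_mod_cast i.pos
  have havg : 1 + 1 / n ≤ (∑ v, w v) / n := by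
    rw [le_div_iff₀ hn, add_mul, one_div_mul_cancel hn.ne', one_mul]
    linarith
  have hkδ' : k * δ < 1 / n := by
    rw [lt_div_iff₀ hn]
    linarith
  linarith [hA.sum_div_sub_le hdisj hcover hδ hw i]

theorem card_sub_le_card_filter_disjoint {α : Type*} [Fintype α] {A : α → Finset V}
    (hdisj : Pairwise (Disjoint on A)) (H : Finset V) :
    Fintype.card α - #H ≤ #{i | Disjoint (A i) H} := by
  have hmeet : #{i | ¬Disjoint (A i) H} ≤ #H :=
    calc #{i | ¬Disjoint (A i) H}
        ≤ ∑ i ∈ {i | ¬Disjoint (A i) H}, #(A i ∩ H) := by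
          simpa using card_nsmul_le_sum _ (fun i => #(A i ∩ H)) 1 fun i hi =>
            card_pos.mpr (not_disjoint_iff_nonempty_inter.mp (mem_filter.mp hi).2)
      _ = #(({i | ¬Disjoint (A i) H} : Finset α).biUnion fun i => A i ∩ H) := by
          rw [card_biUnion]
          intro i _ j _ hij
          exact (hdisj hij).mono inter_subset_left inter_subset_left
      _ ≤ #H := card_le_card (biUnion_subset.mpr fun i _ => inter_subset_right)
  have hsplit := card_filter_add_card_filter_not (s := univ) fun i => Disjoint (A i) H
  rw [card_univ] at hsplit
  omega

end FairDivision

structure IsHubDecomposition {ι : Type*} (G : SimpleGraph V) (H : Finset V) (R : ι → Finset V) :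
    Prop where
  pairwise_disjoint : Pairwise (Disjoint on R)
  disjoint_hubs : ∀ i, Disjoint (R i) H
  exists_mem : ∀ v ∉ H, ∃ i, v ∈ R i
  exists_mem_of_adj : ∀ u v, G.Adj u v → u ∉ H → v ∉ H → ∃ i, u ∈ R i ∧ v ∈ R i

namespace IsHubDecomposition

variable {ι : Type*} {G : SimpleGraph V} {H : Finset V} {R : ι → Finset V}

theorem mem_of_adj (hd : IsHubDecomposition G H R) {i : ι} {u v : V} (huv : G.Adj u v)
    (hu : u ∈ R i) (hv : v ∉ H) : v ∈ R i := by
  obtain ⟨j, huj, hvj⟩ :=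
    hd.exists_mem_of_adj u v huv (disjoint_left.mp (hd.disjoint_hubs i) hu) hv
  obtain rfl : i = j := by
    by_contra hij
    exact disjoint_left.mp (hd.pairwise_disjoint hij) hu huj
  exact hvj

theorem exists_subset_of_preconnected (hd : IsHubDecomposition G H R) {B : Finset V}
    (hB : (G.induce (B : Set V)).Preconnected) (hBH : Disjoint B H) (hne : B.Nonempty) :
    ∃ i, B ⊆ R i := by
  obtain ⟨v, hv⟩ := hne
  obtain ⟨i, hvi⟩ := hd.exists_mem v (disjoint_left.mp hBH hv)
  refine ⟨i, coe_subset.mp (subset_of_induce_preconnected hB hv hvi ?_)⟩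
  intro x y hxy _ hy hx
  exact hd.mem_of_adj hxy hx (disjoint_left.mp hBH hy)

theorem subset_of_one_lt_sum [DecidableEq V] [Fintype ι] (hd : IsHubDecomposition G H R)
    {m : ι → ℝ} (hm : ∀ i, 0 ≤ m i) (hne : ∀ i, (R i).Nonempty) {i₀ : ι}
    (hm₁ : ∀ i ≠ i₀, m i ≤ 1) {B : Finset V} (hB : (G.induce (B : Set V)).Preconnected)
    (hBH : Disjoint B H) (hval : 1 < ∑ x ∈ B, spreadWeight R m x) : B ⊆ R i₀ := by
  obtain ⟨j, hj⟩ := hd.exists_subset_of_preconnected hB hBH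
    (nonempty_of_sum_ne_zero (zero_lt_one.trans hval).ne')
  obtain rfl : j = i₀ := by
    by_contra hj₀
    linarith [sum_spreadWeight_le_of_subset hd.pairwise_disjoint hm hne hj, hm₁ j hj₀]
  exact hj

theorem sum_filter_disjoint_le [DecidableEq V] [Fintype ι] (hd : IsHubDecomposition G H R)
    {m : ι → ℝ} (hm : ∀ i, 0 ≤ m i) (hne : ∀ i, (R i).Nonempty) {i₀ : ι}
    (hm₁ : ∀ i ≠ i₀, m i ≤ 1) {α : Type*} [Fintype α] {A : α → Finset V}
    (hdisj : Pairwise (Disjoint on A)) (hconn : ∀ i, (G.induce (A i : Set V)).Preconnected)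
    (hval : ∀ i, 1 < ∑ x ∈ A i, spreadWeight R m x) :
    ∑ i with Disjoint (A i) H, ∑ x ∈ A i, spreadWeight R m x ≤ m i₀ := by
  rw [← sum_biUnion fun i _ j _ hij => hdisj hij]
  refine sum_spreadWeight_le_of_subset hd.pairwise_disjoint hm hne (biUnion_subset.mpr ?_)
  exact fun i hi => hd.subset_of_one_lt_sum hm hne hm₁ (hconn i) (mem_filter.mp hi).2 (hval i)

theorem exists_weight_not_isEFk [DecidableEq V] [Fintype V] [Fintype ι] [DecidableEq ι]
    (hd : IsHubDecomposition G H R) (i₀ : ι) {h k n : ℕ} (hH : #H ≤ h)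
    (hι : h + 2 ≤ Fintype.card ι) (hn : h < n) (hR : ∀ i, k * n * (n - h) < #(R i)) :
    ∃ w : V → ℝ, (∀ v, 0 ≤ w v) ∧ ∀ A : Fin n → Finset V, Pairwise (Disjoint on A) →
      univ.biUnion A = univ → (∀ i, (G.induce (A i : Set V)).Preconnected) → ¬IsEFk k w A := by
  obtain ⟨d, rfl⟩ : ∃ d, n = h + d := ⟨n - h, by omega⟩
  simp only [Nat.add_sub_cancel_left] at hR
  -- mass `d = n - h` on the region `i₀`, mass `1` on each of the at least `h + 1` others
  set m : ι → ℝ := update 1 i₀ d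
  have hd1 : (1 : ℝ) ≤ d := by exact_mod_cast (by omega : 1 ≤ d)
  have hm : ∀ i, 0 ≤ m i := fun i => by by_cases hi : i = i₀ <;> simp [m, hi]
  have hne : ∀ i, (R i).Nonempty := fun i => card_pos.mp (by have := hR i; omega)
  set w := spreadWeight R m
  set δ : ℝ := d / (k * (h + d) * d + 1)
  have hδ : 0 ≤ δ := by positivity
  have hw : ∀ v, w v ≤ δ := by
    refine spreadWeight_le hd.pairwise_disjoint hδ fun i => ?_
    have hmi : m i ≤ d := by by_cases hi : i = i₀ <;> simp [m, hi, hd1]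
    have hRi : (k * (h + d) * d + 1 : ℝ) ≤ #(R i) := by exact_mod_cast hR i
    exact div_le_div₀ (by positivity) hmi (by positivity) hRi
  have hkδ : ((h + d : ℕ) : ℝ) * k * δ < 1 := by
    rw [mul_div_assoc', div_lt_one (by positivity)]
    push_cast
    linarith
  have htot : ((h + d : ℕ) : ℝ) + 1 ≤ ∑ v, w v := by
    have : (h + 1 : ℝ) ≤ (Fintype.card ι - 1 : ℕ) := by exact_mod_cast (by omega)
    rw [sum_spreadWeight_update_one hne]
    push_cast
    linarith
  refine ⟨w, spreadWeight_nonneg hm, fun A hdisj hcover hconn hEF => ?_⟩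
  have hval := hEF.one_lt_sum hdisj hcover hδ hw hkδ htot
  have hup := hd.sum_filter_disjoint_le hm hne (fun j (hj : j ≠ i₀) => by simp [m, hj]) hdisj
    hconn hval
  set N : Finset (Fin (h + d)) := {i | Disjoint (A i) H}
  have hN : d ≤ #N := by
    refine le_trans ?_ (card_sub_le_card_filter_disjoint hdisj H)
    rw [Fintype.card_fin]
    omega
  have hlow : (#N : ℝ) < ∑ i ∈ N, ∑ x ∈ A i, w x := by
    have hNne : N.Nonempty := card_pos.mp (by omega)
    simpa using sum_lt_sum_of_nonempty hNne fun i _ => hval i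
  have hmass : m i₀ = d := update_self ..
  have : (d : ℝ) ≤ #N := by exact_mod_cast hN
  linarith

end IsHubDecomposition

theorem LipsWitness.isHubDecomposition [DecidableEq V] {G : SimpleGraph V} {a b c : V}
    {p1 p2 : G.Walk a b} {p3 p4 : G.Walk b c} {p5 : G.Walk a c}
    (hlips : LipsWitness G a b c p1 p2 p3 p4 p5) :
    IsHubDecomposition G {a, b, c} ![walkInternalsFinset p1, walkInternalsFinset p2,
      walkInternalsFinset p3, walkInternalsFinset p4, walkInternalsFinset p5] := by
  obtain ⟨-, -, -, -, -, hdisj, hhubs, -, hedges, hsupp⟩ := hlips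
  simp only [← coe_walkInternalsFinset, disjoint_coe] at hdisj
  simp only [← coe_walkInternalsFinset, ← coe_insert, ← coe_singleton, disjoint_coe] at hhubs
  have ha : a ∈ ({a, b, c} : Finset V) := by simp
  have hb : b ∈ ({a, b, c} : Finset V) := by simp
  have hc : c ∈ ({a, b, c} : Finset V) := by simp
  refine ⟨?_, ?_, ?_, ?_⟩
  · intro i j hij
    fin_cases i <;> fin_cases j <;> simp_all [onFun, disjoint_comm]
  · intro i
    fin_cases i <;> simp_all
  · intro v hv
    rcases hsupp v with h | h | h | h | h
    · exact ⟨0, mem_walkInternalsFinset_of_mem_support ha hb h hv⟩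
    · exact ⟨1, mem_walkInternalsFinset_of_mem_support ha hb h hv⟩
    · exact ⟨2, mem_walkInternalsFinset_of_mem_support hb hc h hv⟩
    · exact ⟨3, mem_walkInternalsFinset_of_mem_support hb hc h hv⟩
    · exact ⟨4, mem_walkInternalsFinset_of_mem_support ha hc h hv⟩
  · intro u v huv hu hv
    have he : s(u, v) ∈ G.edgeSet := huv
    rw [← hedges] at he
    rcases he with (((h | h) | h) | h) | h
    · exact ⟨0, mem_walkInternalsFinset_of_mem_edges ha hb h hu hv⟩
    · exact ⟨1, mem_walkInternalsFinset_of_mem_edges ha hb h hu hv⟩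
    · exact ⟨2, mem_walkInternalsFinset_of_mem_edges hb hc h hu hv⟩
    · exact ⟨3, mem_walkInternalsFinset_of_mem_edges hb hc h hu hv⟩
    · exact ⟨4, mem_walkInternalsFinset_of_mem_edges ha hc h hu hv⟩

end

theorem stmt_6_general {V : Type} [Fintype V] [DecidableEq V] (k n : ℕ) (hn : 4 ≤ n)
    (G : SimpleGraph V) (a b c : V)
    (p1 p2 : G.Walk a b) (p3 p4 : G.Walk b c) (p5 : G.Walk a c)
    (hlips : LipsWitness G a b c p1 p2 p3 p4 p5)
    (hbig1 : k * n * (n - 3) < (walkInternals p1).ncard)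
    (hbig2 : k * n * (n - 3) < (walkInternals p2).ncard)
    (hbig3 : k * n * (n - 3) < (walkInternals p3).ncard)
    (hbig4 : k * n * (n - 3) < (walkInternals p4).ncard)
    (hbig5 : k * n * (n - 3) < (walkInternals p5).ncard) :
    ∃ w : V → ℝ, (∀ v, 0 ≤ w v) ∧
      ∀ A : Fin n → Finset V,
        (Pairwise fun i j => Disjoint (A i) (A j)) →
        Finset.univ.biUnion A = Finset.univ →
        (∀ i, (G.induce ((A i : Finset V) : Set V)).Preconnected) →
        ∃ i j, ∀ S : Finset V, S ⊆ A j → S.card ≤ k →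
          ∑ x ∈ A i, w x < ∑ x ∈ A j \ S, w x := by
  simp only [ncard_walkInternals] at hbig1 hbig2 hbig3 hbig4 hbig5
  obtain ⟨w, hw, hnot⟩ := hlips.isHubDecomposition.exists_weight_not_isEFk 0 (h := 3)
    (k := k) (n := n) card_le_three (by simp) (by omega) fun i => by
      fin_cases i
      exacts [hbig1, hbig2, hbig3, hbig4, hbig5]
  refine ⟨w, hw, fun A hdisj hcover hconn => ?_⟩
  simpa [IsEFk] using hnot A hdisj hcover hconn

/-- Negative transfer for lips graphs. Fix `k ≥ 1` and `n ≥ 4`. If each of the five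
defining paths of a lips graph has more than `k·n·(n−3)` internal vertices, then there
is a common additive valuation for which no contiguous allocation to `n` agents is
envy-free up to `k` goods (hence none is EFk-outer). -/
theorem stmt_6 {V : Type} [Fintype V] [DecidableEq V] (k n : ℕ) (hk : 1 ≤ k) (hn : 4 ≤ n)
    (G : SimpleGraph V) (a b c : V)
    (p1 p2 : G.Walk a b) (p3 p4 : G.Walk b c) (p5 : G.Walk a c)
    (hlips : LipsWitness G a b c p1 p2 p3 p4 p5)
    (hbig1 : k * n * (n - 3) < (walkInternals p1).ncard)
    (hbig2 : k * n * (n - 3) < (walkInternals p2).ncard)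
    (hbig3 : k * n * (n - 3) < (walkInternals p3).ncard)
    (hbig4 : k * n * (n - 3) < (walkInternals p4).ncard)
    (hbig5 : k * n * (n - 3) < (walkInternals p5).ncard) :
    ∃ w : V → ℝ, (∀ v, 0 ≤ w v) ∧
      ∀ A : Fin n → Finset V,
        (Pairwise fun i j => Disjoint (A i) (A j)) →
        Finset.univ.biUnion A = Finset.univ →
        (∀ i, (G.induce ((A i : Finset V) : Set V)).Preconnected) →
        ∃ i j, ∀ S : Finset V, S ⊆ A j → S.card ≤ k →
          ∑ x ∈ A i, w x < ∑ x ∈ A j \ S, w x :=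
  stmt_6_general k n hn G a b c p1 p2 p3 p4 p5 hlips hbig1 hbig2 hbig3 hbig4 hbig5
end

section
/- Let T be a stringable tangle, i.e., a tangle admitting a continuous surjection F : [0,1] → T that is injective on the open interval (0,1). Then for every finite subset X ⊆ T with |X| = t, the complement T ∖ X has at most t + 1 connected components; in other words, no stringable tangle has a gap ≥ 2 cutset of any cardinality. -/
/-!
Pull the finite set `X` back along the string `F : [0,1] → T`. Since `F` is injective on
`(0,1)`, the marks `B = {0} ∪ ((0,1) ∩ F⁻¹ X)` number at most `|X| + 1`, and
`F⁻¹ X ⊆ B ∪ {1}`.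
Label a parameter `s ∉ F⁻¹ X` by the last mark `≤ s`. Two parameters with the same label
bound an interval avoiding `F⁻¹ X`, whose image is a connected subset of `T ∖ X`; hence
components of `T ∖ X` are determined by labels, and there are at most `|X| + 1` of them.
-/

noncomputable section

open Set Function

lemma Set.ncard_image_le_ncard_image_of_factors {α β γ : Type*} {f : α → β} {g : α → γ}
    {s : Set α} (hfg : ∀ a ∈ s, ∀ b ∈ s, g a = g b → f a = f b) (hg : (g '' s).Finite) :
    (f '' s).Finite ∧ (f '' s).ncard ≤ (g '' s).ncard := by
  rcases s.eq_empty_or_nonempty with rfl | ⟨a₀, -⟩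
  · simp
  have : Nonempty α := ⟨a₀⟩
  have hsub : f '' s ⊆ (f ∘ invFunOn g s) '' (g '' s) := by
    rintro _ ⟨a, ha, rfl⟩
    have hga : g a ∈ g '' s := mem_image_of_mem g ha
    exact ⟨g a, hga, hfg _ (invFunOn_mem hga) a ha (invFunOn_eq hga)⟩
  exact ⟨(hg.image _).subset hsub,
    (ncard_le_ncard hsub (hg.image _)).trans (ncard_image_le hg)⟩

lemma sSup_inter_Iic_mem {α : Type*} [CompleteLinearOrder α] {B : Set α} (hB : B.Finite)
    (hbot : ⊥ ∈ B) (s : α) :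
    sSup (B ∩ Iic s) ∈ B :=
  (Nonempty.csSup_mem (show (B ∩ Iic s).Nonempty from ⟨⊥, hbot, bot_le⟩)
    (hB.inter_of_left _)).1

lemma disjoint_Icc_of_sSup_inter_Iic_eq {α : Type*} [CompleteLattice α] {B P : Set α}
    (hP : P ⊆ insert ⊤ B) {s s' : α} (hs : s ∉ P) (hs' : s' ∉ P)
    (hmark : sSup (B ∩ Iic s) = sSup (B ∩ Iic s')) :
    Disjoint (Icc s s') P := by
  rw [disjoint_left]
  rintro u ⟨hsu, hus'⟩ huP
  rcases hP huP with rfl | huB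
  · exact hs' (top_le_iff.1 hus' ▸ huP)
  · have hus : u ≤ s := calc
      u ≤ sSup (B ∩ Iic s') := le_sSup (show u ∈ B ∩ Iic s' from ⟨huB, hus'⟩)
      _ = sSup (B ∩ Iic s) := hmark.symm
      _ ≤ s := sSup_le fun _ hb => hb.2
    exact hs (le_antisymm hus hsu ▸ huP)

lemma preimage_subset_insert_top_insert_bot {α β : Type*} [PartialOrder α] [BoundedOrder α]
    (F : α → β) (X : Set β) :
    F ⁻¹' X ⊆ insert ⊤ (insert ⊥ (Ioo ⊥ ⊤ ∩ F ⁻¹' X)) := by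
  intro u hu
  by_cases htop : u = ⊤
  · exact Or.inl htop
  by_cases hbot : u = ⊥
  · exact Or.inr (Or.inl hbot)
  exact Or.inr (Or.inr ⟨⟨bot_lt_iff_ne_bot.2 hbot, lt_top_iff_ne_top.2 htop⟩, hu⟩)

section Components

variable {α T : Type*} [TopologicalSpace T]

lemma setOf_connectedComponentIn_eq_image {F : α → T} (hF : Surjective F) (X : Set T) :
    {C : Set T | ∃ x ∈ Xᶜ, C = connectedComponentIn Xᶜ x} =
      (fun s => connectedComponentIn Xᶜ (F s)) '' (F ⁻¹' X)ᶜ := by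
  ext C
  constructor
  · rintro ⟨x, hx, rfl⟩
    obtain ⟨s, rfl⟩ := hF x
    exact ⟨s, hx, rfl⟩
  · rintro ⟨s, hs, rfl⟩
    exact ⟨F s, hs, rfl⟩

variable [ConditionallyCompleteLinearOrder α] [TopologicalSpace α] [OrderTopology α]
  [DenselyOrdered α]

lemma connectedComponentIn_eq_of_Icc_subset {F : α → T} (hF : Continuous F) {X : Set T}
    {s s' : α} (hle : s ≤ s') (h : Icc s s' ⊆ F ⁻¹' Xᶜ) :
    connectedComponentIn Xᶜ (F s) = connectedComponentIn Xᶜ (F s') :=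
  connectedComponentIn_eq <|
    (isPreconnected_Icc.image F hF.continuousOn).subset_connectedComponentIn
      (mem_image_of_mem F (left_mem_Icc.2 hle)) (image_subset_iff.2 h)
      (mem_image_of_mem F (right_mem_Icc.2 hle))

end Components

section String

variable {α T : Type*} [CompleteLinearOrder α] [TopologicalSpace α] [OrderTopology α]
  [DenselyOrdered α] [TopologicalSpace T]

lemma connectedComponentIn_eq_of_sSup_inter_Iic_eq {F : α → T} (hF : Continuous F)
    {X : Set T} {B : Set α} (hP : F ⁻¹' X ⊆ insert ⊤ B) {s s' : α} (hs : s ∉ F ⁻¹' X)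
    (hs' : s' ∉ F ⁻¹' X) (hmark : sSup (B ∩ Iic s) = sSup (B ∩ Iic s')) :
    connectedComponentIn Xᶜ (F s) = connectedComponentIn Xᶜ (F s') := by
  wlog hle : s ≤ s' generalizing s s'
  · exact (this hs' hs hmark.symm (le_of_not_ge hle)).symm
  exact connectedComponentIn_eq_of_Icc_subset hF hle fun u hu =>
    disjoint_left.1 (disjoint_Icc_of_sSup_inter_Iic_eq hP hs hs' hmark) hu

theorem finite_and_ncard_connectedComponentIn_compl_le {F : α → T} (hF : Continuous F)
    (hsurj : Surjective F) (hinj : InjOn F (Ioo ⊥ ⊤)) {X : Set T} (hX : X.Finite) :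
    {C : Set T | ∃ x ∈ Xᶜ, C = connectedComponentIn Xᶜ x}.Finite ∧
      {C : Set T | ∃ x ∈ Xᶜ, C = connectedComponentIn Xᶜ x}.ncard ≤ X.ncard + 1 := by
  set A := Ioo ⊥ ⊤ ∩ F ⁻¹' X
  set B := insert ⊥ A
  have hinjA : InjOn F A := hinj.mono inter_subset_left
  have hA : A.Finite :=
    Finite.of_finite_image (hX.subset (image_subset_iff.2 inter_subset_right)) hinjA
  have hAcard : A.ncard ≤ X.ncard := ncard_le_ncard_of_injOn F (fun _ ha => ha.2) hinjA hX
  have hB : B.Finite := hA.insert ⊥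
  have hmarks : (fun s => sSup (B ∩ Iic s)) '' (F ⁻¹' X)ᶜ ⊆ B := by
    rintro _ ⟨s, -, rfl⟩
    exact sSup_inter_Iic_mem hB (mem_insert ⊥ A) s
  rw [setOf_connectedComponentIn_eq_image hsurj]
  obtain ⟨hfin, hcard⟩ := ncard_image_le_ncard_image_of_factors
    (fun s hs s' hs' => connectedComponentIn_eq_of_sSup_inter_Iic_eq hF
      (preimage_subset_insert_top_insert_bot F X) hs hs') (hB.subset hmarks)
  refine ⟨hfin, ?_⟩
  calc _ ≤ _ := hcard
    _ ≤ B.ncard := ncard_le_ncard hmarks hB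
    _ ≤ A.ncard + 1 := ncard_insert_le ⊥ A
    _ ≤ X.ncard + 1 := by omega

end String

theorem stmt_8_general (T : Type) [TopologicalSpace T] (hS : Stringable T)
    (t : ℕ) (X : Set T) (hXfin : X.Finite) (hXcard : X.ncard = t) :
    {C : Set T | ∃ x ∈ Xᶜ, C = connectedComponentIn Xᶜ x}.Finite ∧
    {C : Set T | ∃ x ∈ Xᶜ, C = connectedComponentIn Xᶜ x}.ncard ≤ t + 1 := by
  obtain ⟨F, hF, hsurj, hinj⟩ := hS
  subst hXcard
  exact finite_and_ncard_connectedComponentIn_compl_le hF hsurj hinj hXfin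

/-- No stringable tangle has a gap ≥ 2 cutset: removing any finite set of `t` points
from a stringable tangle leaves at most `t + 1` connected components. -/
theorem stmt_8 (T : Type) [TopologicalSpace T] (hT : IsTangle T) (hS : Stringable T)
    (t : ℕ) (X : Set T) (hXfin : X.Finite) (hXcard : X.ncard = t) :
    {C : Set T | ∃ x ∈ Xᶜ, C = connectedComponentIn Xᶜ x}.Finite ∧
    {C : Set T | ∃ x ∈ Xᶜ, C = connectedComponentIn Xᶜ x}.ncard ≤ t + 1 :=
  stmt_8_general T hS t X hXfin hXcard
end
end

section
/- Let three agents have monotone valuations over the items of an enumeration P = (v₁,…,v_m), and suppose v_r is a median lumpy tie over P. Then for every pair {i,k} of the three agents there is an allocation of all items of P to i and k in which one of them receives L(v_r) ∪ {v_r} and the other receives R(v_r), or one receives L(v_r) and the other receives R(v_r) ∪ {v_r}, such that: ν_i(A_i) ≥ ν_i(A_k ∖ {v_r}) and ν_k(A_k) ≥ ν_k(A_i ∖ {v_r}) (the allocation is envy-free up to {v_r}), and moreover each of the two agents values their own bundle at least as much as each of the two bundles L(v_r) and R(v_r). -/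
/-- The bundle `{v s, …, v t}` of items (empty if `s > t`). -/
def segF {V : Type} [DecidableEq V] (v : ℕ → V) (s t : ℕ) : Finset V :=
  (Finset.Icc s t).image v

/-- `v r` is a lumpy tie over the enumeration `v 1, …, v m` for the valuation `ν`. -/
def IsLumpyTie {V : Type} [DecidableEq V] (v : ℕ → V) (m : ℕ) (ν : Finset V → ℝ)
    (r : ℕ) : Prop :=
  ν (segF v 1 (r - 1) ∪ {v r}) ≥ ν (segF v (r + 1) m) ∧
  ν (segF v (r + 1) m ∪ {v r}) ≥ ν (segF v 1 (r - 1))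

/-- `v r` is a median lumpy tie over `v 1, …, v m` for three agents. -/
def IsMedianLumpyTie {V : Type} [DecidableEq V] (v : ℕ → V) (m : ℕ)
    (ν : Fin 3 → Finset V → ℝ) (r : ℕ) : Prop :=
  ∃ a b c : ℕ, (1 ≤ a ∧ a ≤ m) ∧ (1 ≤ b ∧ b ≤ m) ∧ (1 ≤ c ∧ c ≤ m) ∧
    IsLumpyTie v m (ν 0) a ∧ IsLumpyTie v m (ν 1) b ∧ IsLumpyTie v m (ν 2) c ∧
    r = max (min a b) (min (max a b) c)

/-!
If agent `i`'s lumpy tie lies at or left of `v r` and agent `k`'s at or right of it, then by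
monotonicity `i` prefers `L ∪ {v r}` to `R` and `k` prefers `R ∪ {v r}` to `L`, where
`L = L(v r)` and `R = R(v r)`. From these two preferences a cut-and-choose case split on
how `k` compares `L` with `R`, and then how `i` does, produces the allocation. The median of
three tie positions lies between the positions of any two of the agents.
-/

section Segments

variable {V : Type} [DecidableEq V] (v : ℕ → V)

lemma segF_subset_segF {s t s' t' : ℕ} (hs : s' ≤ s) (ht : t ≤ t') :
    segF v s t ⊆ segF v s' t' :=
  Finset.image_subset_image (Finset.Icc_subset_Icc hs ht)

lemma segF_pred_union_singleton {s p : ℕ} (hsp : s ≤ p) :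
    segF v s (p - 1) ∪ {v p} = segF v s p := by
  have h : Finset.Icc s p = Finset.Icc s (p - 1) ∪ {p} := by
    ext x; simp only [Finset.mem_Icc, Finset.mem_union, Finset.mem_singleton]; omega
  rw [segF, segF, h, Finset.image_union, Finset.image_singleton]

lemma segF_succ_union_singleton {p t : ℕ} (hpt : p ≤ t) :
    segF v (p + 1) t ∪ {v p} = segF v p t := by
  have h : Finset.Icc p t = Finset.Icc (p + 1) t ∪ {p} := by
    ext x; simp only [Finset.mem_Icc, Finset.mem_union, Finset.mem_singleton]; omega
  rw [segF, segF, h, Finset.image_union, Finset.image_singleton]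

lemma apply_mem_segF_iff {S : Set ℕ} (hv : Set.InjOn v S) {s t r : ℕ}
    (hst : Set.Icc s t ⊆ S) (hr : r ∈ S) : v r ∈ segF v s t ↔ r ∈ Finset.Icc s t := by
  refine ⟨fun h => ?_, Finset.mem_image_of_mem v⟩
  obtain ⟨x, hx, hxr⟩ := Finset.mem_image.mp h
  rwa [← hv (hst (Finset.coe_Icc s t ▸ hx)) hr hxr]

end Segments

section CutAndChoose

variable {V : Type} [DecidableEq V]

def IsFairSplit (νi νk : Finset V → ℝ) (L R : Finset V) (x : V) (Ai Ak : Finset V) : Prop :=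
  ((Ai = L ∪ {x} ∧ Ak = R) ∨ (Ai = L ∧ Ak = R ∪ {x}) ∨
    (Ai = R ∪ {x} ∧ Ak = L) ∨ (Ai = R ∧ Ak = L ∪ {x})) ∧
  νi Ai ≥ νi (Ak \ {x}) ∧ νk Ak ≥ νk (Ai \ {x}) ∧
  νi Ai ≥ νi L ∧ νi Ai ≥ νi R ∧ νk Ak ≥ νk L ∧ νk Ak ≥ νk R

lemma IsFairSplit.symm {νi νk : Finset V → ℝ} {L R : Finset V} {x : V} {Ai Ak : Finset V}
    (h : IsFairSplit νi νk L R x Ai Ak) : IsFairSplit νk νi L R x Ak Ai := by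
  obtain ⟨hbundles, hi, hk, hiL, hiR, hkL, hkR⟩ := h
  exact ⟨by tauto, hk, hi, hkL, hkR, hiL, hiR⟩

lemma exists_isFairSplit {νi νk : Finset V → ℝ} (hνi : Monotone νi) (hνk : Monotone νk)
    {L R : Finset V} {x : V} (hxL : x ∉ L) (hxR : x ∉ R)
    (hi : νi R ≤ νi (L ∪ {x})) (hk : νk L ≤ νk (R ∪ {x})) :
    ∃ Ai Ak, IsFairSplit νi νk L R x Ai Ak := by
  have hL : (L ∪ {x}) \ {x} = L :=
    Finset.union_sdiff_cancel_right (Finset.disjoint_singleton_right.mpr hxL)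
  have hR : (R ∪ {x}) \ {x} = R :=
    Finset.union_sdiff_cancel_right (Finset.disjoint_singleton_right.mpr hxR)
  have hL' : L \ {x} = L := Finset.sdiff_eq_self_of_disjoint
    (Finset.disjoint_singleton_right.mpr hxL)
  have hR' : R \ {x} = R := Finset.sdiff_eq_self_of_disjoint
    (Finset.disjoint_singleton_right.mpr hxR)
  have hiL : νi L ≤ νi (L ∪ {x}) := hνi Finset.subset_union_left
  have hkL : νk L ≤ νk (L ∪ {x}) := hνk Finset.subset_union_left
  have hkR : νk R ≤ νk (R ∪ {x}) := hνk Finset.subset_union_left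
  rcases le_total (νk L) (νk R) with hkLR | hkRL
  · exact ⟨L ∪ {x}, R, Or.inl ⟨rfl, rfl⟩, by rwa [hR'], by rwa [hL], hiL, hi, hkLR, le_rfl⟩
  rcases le_total (νi L) (νi R) with hiLR | hiRL
  · exact ⟨R, L ∪ {x}, Or.inr (Or.inr (Or.inr ⟨rfl, rfl⟩)), by rwa [hL],
      by rw [hR']; linarith, hiLR, le_rfl, hkL, by linarith⟩
  · exact ⟨L, R ∪ {x}, Or.inr (Or.inl ⟨rfl, rfl⟩), by rwa [hR], by rwa [hL'],
      le_rfl, hiRL, hk, hkR⟩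

end CutAndChoose

section LumpyTies

variable {V : Type} [DecidableEq V] {v : ℕ → V} {m : ℕ} {ν : Finset V → ℝ}

lemma IsLumpyTie.right_le_left_union (hν : Monotone ν) {p r : ℕ}
    (ht : IsLumpyTie v m ν p) (hp : 1 ≤ p) (hpr : p ≤ r) :
    ν (segF v (r + 1) m) ≤ ν (segF v 1 (r - 1) ∪ {v r}) :=
  calc ν (segF v (r + 1) m) ≤ ν (segF v (p + 1) m) := hν (segF_subset_segF v (by omega) le_rfl)
    _ ≤ ν (segF v 1 (p - 1) ∪ {v p}) := ht.1
    _ = ν (segF v 1 p) := by rw [segF_pred_union_singleton v hp]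
    _ ≤ ν (segF v 1 r) := hν (segF_subset_segF v le_rfl hpr)
    _ = ν (segF v 1 (r - 1) ∪ {v r}) := by rw [segF_pred_union_singleton v (hp.trans hpr)]

lemma IsLumpyTie.left_le_right_union (hν : Monotone ν) {q r : ℕ}
    (ht : IsLumpyTie v m ν q) (hq : q ≤ m) (hrq : r ≤ q) :
    ν (segF v 1 (r - 1)) ≤ ν (segF v (r + 1) m ∪ {v r}) :=
  calc ν (segF v 1 (r - 1)) ≤ ν (segF v 1 (q - 1)) := hν (segF_subset_segF v le_rfl (by omega))
    _ ≤ ν (segF v (q + 1) m ∪ {v q}) := ht.2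
    _ = ν (segF v q m) := by rw [segF_succ_union_singleton v hq]
    _ ≤ ν (segF v r m) := hν (segF_subset_segF v hrq le_rfl)
    _ = ν (segF v (r + 1) m ∪ {v r}) := by rw [segF_succ_union_singleton v (hrq.trans hq)]

lemma exists_isFairSplit_of_le_of_le (hv : Set.InjOn v (Set.Icc 1 m))
    {νi νk : Finset V → ℝ} (hνi : Monotone νi) (hνk : Monotone νk) {p q r : ℕ}
    (hti : IsLumpyTie v m νi p) (htk : IsLumpyTie v m νk q)
    (hp : 1 ≤ p) (hq : q ≤ m) (hpr : p ≤ r) (hrq : r ≤ q) :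
    ∃ Ai Ak, IsFairSplit νi νk (segF v 1 (r - 1)) (segF v (r + 1) m) (v r) Ai Ak := by
  have hr : r ∈ Set.Icc 1 m := ⟨by omega, by omega⟩
  refine exists_isFairSplit hνi hνk ?_ ?_ (hti.right_le_left_union hνi hp hpr)
    (htk.left_le_right_union hνk hq hrq)
  · rw [apply_mem_segF_iff v hv (Set.Icc_subset_Icc le_rfl (by omega)) hr, Finset.mem_Icc]
    omega
  · rw [apply_mem_segF_iff v hv (Set.Icc_subset_Icc (by omega) le_rfl) hr, Finset.mem_Icc]
    omega

lemma IsMedianLumpyTie.exists_tie_positions {ν : Fin 3 → Finset V → ℝ} {r : ℕ}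
    (h : IsMedianLumpyTie v m ν r) :
    ∃ t : Fin 3 → ℕ, (∀ j, 1 ≤ t j ∧ t j ≤ m ∧ IsLumpyTie v m (ν j) (t j)) ∧
      ∀ i k, i ≠ k → (t i ≤ r ∧ r ≤ t k) ∨ (t k ≤ r ∧ r ≤ t i) := by
  obtain ⟨a, b, c, ⟨ha1, ham⟩, ⟨hb1, hbm⟩, ⟨hc1, hcm⟩, hta, htb, htc, hr⟩ := h
  refine ⟨![a, b, c], fun j => ?_, fun i k hik => ?_⟩
  · fin_cases j <;> exact ⟨‹_›, ‹_›, ‹_›⟩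
  · fin_cases i <;> fin_cases k <;> simp at hik ⊢ <;> omega

end LumpyTies

theorem stmt_11_general {V : Type} [DecidableEq V] (m : ℕ) (v : ℕ → V)
    (hv : Set.InjOn v (Set.Icc 1 m))
    (ν : Fin 3 → Finset V → ℝ)
    (hν : ∀ i, ν i ∅ = 0 ∧ ∀ X Y : Finset V, X ⊆ Y → ν i X ≤ ν i Y)
    (r : ℕ)
    (hmed : IsMedianLumpyTie v m ν r) :
    ∀ i k : Fin 3, i ≠ k →
      ∃ Ai Ak : Finset V,
        ((Ai = segF v 1 (r - 1) ∪ {v r} ∧ Ak = segF v (r + 1) m) ∨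
         (Ai = segF v 1 (r - 1) ∧ Ak = segF v (r + 1) m ∪ {v r}) ∨
         (Ai = segF v (r + 1) m ∪ {v r} ∧ Ak = segF v 1 (r - 1)) ∨
         (Ai = segF v (r + 1) m ∧ Ak = segF v 1 (r - 1) ∪ {v r})) ∧
        ν i Ai ≥ ν i (Ak \ {v r}) ∧
        ν k Ak ≥ ν k (Ai \ {v r}) ∧
        ν i Ai ≥ ν i (segF v 1 (r - 1)) ∧ ν i Ai ≥ ν i (segF v (r + 1) m) ∧
        ν k Ak ≥ ν k (segF v 1 (r - 1)) ∧ ν k Ak ≥ ν k (segF v (r + 1) m) := by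
  intro i k hik
  have hmono : ∀ j, Monotone (ν j) := fun j _ _ => (hν j).2 _ _
  obtain ⟨t, ht, hbetween⟩ := hmed.exists_tie_positions
  obtain ⟨hi1, him, hti⟩ := ht i
  obtain ⟨hk1, hkm, htk⟩ := ht k
  rcases hbetween i k hik with ⟨hir, hrk⟩ | ⟨hkr, hri⟩
  · exact exists_isFairSplit_of_le_of_le hv (hmono i) (hmono k) hti htk hi1 hkm hir hrk
  · obtain ⟨Ak, Ai, hsplit⟩ :=
      exists_isFairSplit_of_le_of_le hv (hmono k) (hmono i) htk hti hk1 him hkr hri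
    exact ⟨Ai, Ak, hsplit.symm⟩

/-- Median Lumpy Ties Lemma. If `v r` is a median lumpy tie for three agents with
monotone valuations, then for every pair `{i, k}` of the agents there is an allocation
of all items `v 1, …, v m` to `i` and `k` — one of them getting `L(v_r) ∪ {v_r}` and the
other `R(v_r)`, or one getting `L(v_r)` and the other `R(v_r) ∪ {v_r}` — which is
envy-free up to `{v r}`, and in which each of the two agents values their own bundle at
least as much as each of the bundles `L(v_r)` and `R(v_r)`. -/
theorem stmt_11 {V : Type} [DecidableEq V] (m : ℕ) (v : ℕ → V)
    (hv : Set.InjOn v (Set.Icc 1 m))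
    (ν : Fin 3 → Finset V → ℝ)
    (hν : ∀ i, ν i ∅ = 0 ∧ ∀ X Y : Finset V, X ⊆ Y → ν i X ≤ ν i Y)
    (r : ℕ) (hr1 : 1 ≤ r) (hrm : r ≤ m)
    (hmed : IsMedianLumpyTie v m ν r) :
    ∀ i k : Fin 3, i ≠ k →
      ∃ Ai Ak : Finset V,
        ((Ai = segF v 1 (r - 1) ∪ {v r} ∧ Ak = segF v (r + 1) m) ∨
         (Ai = segF v 1 (r - 1) ∧ Ak = segF v (r + 1) m ∪ {v r}) ∨
         (Ai = segF v (r + 1) m ∪ {v r} ∧ Ak = segF v 1 (r - 1)) ∨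
         (Ai = segF v (r + 1) m ∧ Ak = segF v 1 (r - 1) ∪ {v r})) ∧
        ν i Ai ≥ ν i (Ak \ {v r}) ∧
        ν k Ak ≥ ν k (Ai \ {v r}) ∧
        ν i Ai ≥ ν i (segF v 1 (r - 1)) ∧ ν i Ai ≥ ν i (segF v (r + 1) m) ∧
        ν k Ak ≥ ν k (segF v 1 (r - 1)) ∧ ν k Ak ≥ ν k (segF v (r + 1) m) :=
  stmt_11_general m v hv ν hν r hmed
end

section
/- Let three agents have monotone valuations over the items of an enumeration P = (v₁,…,v_m), and suppose v_r is a median lumpy tie over P. Call agent i a left agent (respectively, right agent) with respect to v_r if every lumpy tie for i appears strictly before (respectively, strictly after) v_r, and a middle agent if v_r is itself a lumpy tie for i. Then at most one of the three agents is a left agent, at most one is a right agent, and at least one is a middle agent. -/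
/-- Agent `i` is a left agent with respect to `v r`: every lumpy tie of `i` appears
strictly before `v r`. -/
def LeftAgent {V : Type} [DecidableEq V] (v : ℕ → V) (m : ℕ) (ν : Finset V → ℝ)
    (r : ℕ) : Prop :=
  ∀ a : ℕ, 1 ≤ a → a ≤ m → IsLumpyTie v m ν a → a < r

/-- Agent `i` is a right agent with respect to `v r`: every lumpy tie of `i` appears
strictly after `v r`. -/
def RightAgent {V : Type} [DecidableEq V] (v : ℕ → V) (m : ℕ) (ν : Finset V → ℝ)
    (r : ℕ) : Prop :=
  ∀ a : ℕ, 1 ≤ a → a ≤ m → IsLumpyTie v m ν a → r < a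

/-
A median of three values lies weakly between any two of them, so no two of the three witnessing
lumpy-tie indices lie strictly on the same side of `r`, whereas a left (right) agent's witness lies
strictly before (after) `r`. The median is one of the three values, so the agent it belongs to is
a middle agent.
-/

def median3 {α : Type*} [LinearOrder α] (a b c : α) : α := max (min a b) (min (max a b) c)

section Median

variable {α : Type*} [LinearOrder α]

theorem exists_eq_median3 (t : Fin 3 → α) : ∃ i, t i = median3 (t 0) (t 1) (t 2) := by
  unfold median3
  rcases le_total (t 0) (t 1) with h01 | h01 <;> rcases le_total (t 0) (t 2) with h02 | h02 <;>
    rcases le_total (t 1) (t 2) with h12 | h12 <;> simp [*]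

theorem median3_le_max_of_ne (t : Fin 3 → α) {i j : Fin 3} (hij : i ≠ j) :
    median3 (t 0) (t 1) (t 2) ≤ max (t i) (t j) := by
  unfold median3
  fin_cases i <;> fin_cases j <;> simp at hij ⊢ <;> grind

theorem min_le_median3_of_ne (t : Fin 3 → α) {i j : Fin 3} (hij : i ≠ j) :
    min (t i) (t j) ≤ median3 (t 0) (t 1) (t 2) := by
  unfold median3
  fin_cases i <;> fin_cases j <;> simp at hij ⊢

theorem eq_of_lt_median3 (t : Fin 3 → α) {i j : Fin 3} (hi : t i < median3 (t 0) (t 1) (t 2))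
    (hj : t j < median3 (t 0) (t 1) (t 2)) : i = j := by
  by_contra hij
  exact (max_lt hi hj).not_ge (median3_le_max_of_ne t hij)

theorem eq_of_median3_lt (t : Fin 3 → α) {i j : Fin 3} (hi : median3 (t 0) (t 1) (t 2) < t i)
    (hj : median3 (t 0) (t 1) (t 2) < t j) : i = j := by
  by_contra hij
  exact (lt_min hi hj).not_ge (min_le_median3_of_ne t hij)

end Median

theorem IsMedianLumpyTie.exists_ties {V : Type} [DecidableEq V] {v : ℕ → V} {m : ℕ}
    {ν : Fin 3 → Finset V → ℝ} {r : ℕ} (hmed : IsMedianLumpyTie v m ν r) :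
    ∃ t : Fin 3 → ℕ, (∀ i, 1 ≤ t i ∧ t i ≤ m ∧ IsLumpyTie v m (ν i) (t i)) ∧
      r = median3 (t 0) (t 1) (t 2) := by
  obtain ⟨a, b, c, ha, hb, hc, hta, htb, htc, rfl⟩ := hmed
  refine ⟨![a, b, c], fun i => ?_, rfl⟩
  fin_cases i
  exacts [⟨ha.1, ha.2, hta⟩, ⟨hb.1, hb.2, htb⟩, ⟨hc.1, hc.2, htc⟩]

theorem stmt_13_general {V : Type} [DecidableEq V] (m : ℕ) (v : ℕ → V)
    (ν : Fin 3 → Finset V → ℝ)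
    (r : ℕ)
    (hmed : IsMedianLumpyTie v m ν r) :
    (∀ i j : Fin 3, LeftAgent v m (ν i) r → LeftAgent v m (ν j) r → i = j) ∧
    (∀ i j : Fin 3, RightAgent v m (ν i) r → RightAgent v m (ν j) r → i = j) ∧
    (∃ i : Fin 3, IsLumpyTie v m (ν i) r) := by
  obtain ⟨t, ht, rfl⟩ := hmed.exists_ties
  refine ⟨fun i j hi hj => ?_, fun i j hi hj => ?_, ?_⟩
  · exact eq_of_lt_median3 t (hi _ (ht i).1 (ht i).2.1 (ht i).2.2)
      (hj _ (ht j).1 (ht j).2.1 (ht j).2.2)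
  · exact eq_of_median3_lt t (hi _ (ht i).1 (ht i).2.1 (ht i).2.2)
      (hj _ (ht j).1 (ht j).2.1 (ht j).2.2)
  · obtain ⟨i, hi⟩ := exists_eq_median3 t
    exact ⟨i, hi ▸ (ht i).2.2⟩

/-- If `v r` is a median lumpy tie for three agents with monotone valuations, then at
most one agent is a left agent, at most one is a right agent, and at least one agent is
a middle agent (i.e. has `v r` as a lumpy tie). -/
theorem stmt_13 {V : Type} [DecidableEq V] (m : ℕ) (v : ℕ → V)
    (hv : Set.InjOn v (Set.Icc 1 m))
    (ν : Fin 3 → Finset V → ℝ)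
    (hν : ∀ i, ν i ∅ = 0 ∧ ∀ X Y : Finset V, X ⊆ Y → ν i X ≤ ν i Y)
    (r : ℕ) (hr1 : 1 ≤ r) (hrm : r ≤ m)
    (hmed : IsMedianLumpyTie v m ν r) :
    (∀ i j : Fin 3, LeftAgent v m (ν i) r → LeftAgent v m (ν j) r → i = j) ∧
    (∀ i j : Fin 3, RightAgent v m (ν i) r → RightAgent v m (ν j) r → i = j) ∧
    (∃ i : Fin 3, IsLumpyTie v m (ν i) r) :=
  stmt_13_general m v ν r hmed
end

section
/- Let G' be a finite simple graph with a handle decomposition (X, G''): G'' is a subgraph of G', X = (u₁,…,u_k) is a path in G' none of whose vertices lies in G'', and V(G') = V(G'') ∪ V(X). Suppose Y = (w₁,…,w_p) is a bipolar numbering of G'' and the last vertex u_k of X is adjacent in G' to the first vertex w₁ of Y. Then the concatenated enumeration (u₁,…,u_k,w₁,…,w_p) is a bipolar numbering of G'. -/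
/-!
The vertices of a path, taken in order, have connected initial and final segments. Gluing two
sequences with this property by an edge from the last vertex of the first to the first vertex of
the second keeps it: an initial segment of the concatenation is an initial segment of the first
sequence, or all of it joined by that edge to an initial segment of the second, and symmetrically
for final segments. Bijectivity holds because the path and `W` partition the vertices.
-/

open Set

namespace Fin

variable {α : Type*} {m n : ℕ} (u : Fin m → α) (w : Fin n → α)

theorem image_append (S : Set (Fin (m + n))) :
    append u w '' S = u '' (castAdd n ⁻¹' S) ∪ w '' (natAdd m ⁻¹' S) := by
  ext x
  constructor
  · rintro ⟨i, hi, rfl⟩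
    induction i using addCases with
    | left i => exact Or.inl ⟨i, hi, (append_left u w i).symm⟩
    | right i => exact Or.inr ⟨i, hi, (append_right u w i).symm⟩
  · rintro (⟨i, hi, rfl⟩ | ⟨i, hi, rfl⟩)
    · exact ⟨_, hi, append_left u w i⟩
    · exact ⟨_, hi, append_right u w i⟩

theorem range_append : range (append u w) = range u ∪ range w := by
  simp only [← image_univ, image_append, preimage_univ]

theorem castAdd_lt_natAdd (i : Fin m) (j : Fin n) : castAdd n i < natAdd m j := by
  rw [lt_def, val_castAdd, val_natAdd]
  omega

theorem image_append_Iic_castAdd (j : Fin m) : append u w '' Iic (castAdd n j) = u '' Iic j := by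
  have : natAdd m ⁻¹' Iic (castAdd n j) = ∅ :=
    eq_empty_of_forall_notMem fun i hi => (castAdd_lt_natAdd j i).not_ge hi
  rw [image_append, preimage_castAdd_Iic_castAdd, this, image_empty, union_empty]

theorem image_append_Ici_castAdd (j : Fin m) :
    append u w '' Ici (castAdd n j) = u '' Ici j ∪ range w := by
  have : natAdd m ⁻¹' Ici (castAdd n j) = univ :=
    eq_univ_of_forall fun i => (castAdd_lt_natAdd j i).le
  rw [image_append, preimage_castAdd_Ici_castAdd, this, image_univ]

theorem image_append_Iic_natAdd (j : Fin n) :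
    append u w '' Iic (natAdd m j) = range u ∪ w '' Iic j := by
  have : castAdd n ⁻¹' Iic (natAdd m j) = univ :=
    eq_univ_of_forall fun i => (castAdd_lt_natAdd i j).le
  rw [image_append, preimage_natAdd_Iic_natAdd, this, image_univ]

theorem image_append_Ici_natAdd (j : Fin n) : append u w '' Ici (natAdd m j) = w '' Ici j := by
  have : castAdd n ⁻¹' Ici (natAdd m j) = ∅ :=
    eq_empty_of_forall_notMem fun i hi => (castAdd_lt_natAdd i j).not_ge hi
  rw [image_append, preimage_natAdd_Ici_natAdd, this, image_empty, empty_union]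

end Fin

namespace SimpleGraph

variable {V : Type*} {G G' : SimpleGraph V}

/-- A bipolar numbering of `G` is a bijective `f` with `G.SegmentsConnected f`. -/
def SegmentsConnected (G : SimpleGraph V) {n : ℕ} (f : Fin n → V) : Prop :=
  ∀ j, (G.induce (f '' Iic j)).Connected ∧ (G.induce (f '' Ici j)).Connected

section Path

variable {k : ℕ} {u : Fin k → V}

lemma reachable_induce_image_of_ordConnected
    (hu : ∀ (i : ℕ) (h : i + 1 < k), G.Adj (u ⟨i, by omega⟩) (u ⟨i + 1, h⟩))
    {S : Set (Fin k)} (hS : S.OrdConnected)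
    {i j : Fin k} (hi : i ∈ S) (hj : j ∈ S) (hij : i ≤ j) :
    (G.induce (u '' S)).Reachable
      ⟨u i, mem_image_of_mem u hi⟩ ⟨u j, mem_image_of_mem u hj⟩ := by
  obtain ⟨j, hjk⟩ := j
  change (i : ℕ) ≤ j at hij
  induction j, hij using Nat.le_induction with
  | base => rfl
  | succ j hij ih =>
    have hjS : (⟨j, by omega⟩ : Fin k) ∈ S :=
      hS.out hi hj ⟨hij, Fin.le_def.2 (Nat.le_succ j)⟩
    exact (ih _ hjS).trans (induce_adj.2 (hu j hjk)).reachable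

lemma connected_induce_image_of_ordConnected
    (hu : ∀ (i : ℕ) (h : i + 1 < k), G.Adj (u ⟨i, by omega⟩) (u ⟨i + 1, h⟩))
    {S : Set (Fin k)} (hS : S.OrdConnected) (hne : S.Nonempty) : (G.induce (u '' S)).Connected := by
  obtain ⟨i, hi⟩ := hne
  rw [connected_iff_exists_forall_reachable]
  refine ⟨⟨u i, mem_image_of_mem u hi⟩, ?_⟩
  rintro ⟨_, j, hj, rfl⟩
  rcases le_total i j with hij | hji
  · exact reachable_induce_image_of_ordConnected hu hS hi hj hij
  · exact (reachable_induce_image_of_ordConnected hu hS hj hi hji).symm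

lemma segmentsConnected_of_adj_succ
    (hu : ∀ (i : ℕ) (h : i + 1 < k), G.Adj (u ⟨i, by omega⟩) (u ⟨i + 1, h⟩)) :
    G.SegmentsConnected u := fun _ =>
  ⟨connected_induce_image_of_ordConnected hu ordConnected_Iic nonempty_Iic,
    connected_induce_image_of_ordConnected hu ordConnected_Ici nonempty_Ici⟩

end Path

namespace SegmentsConnected

variable {m n : ℕ} {u : Fin m → V} {w : Fin n → V}

lemma mono (h : G ≤ G') (hu : G.SegmentsConnected u) : G'.SegmentsConnected u := fun j =>
  ⟨(hu j).1.mono fun _ _ hab => h hab, (hu j).2.mono fun _ _ hab => h hab⟩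

lemma connected_induce_range [NeZero m] (hu : G.SegmentsConnected u) :
    (G.induce (range u)).Connected := by
  have hIci : Ici (⊥ : Fin m) = univ := eq_univ_of_forall fun _ => mem_Ici.2 bot_le
  rw [← image_univ, ← hIci]
  exact (hu ⊥).2

lemma append [NeZero m] [NeZero n] (hu : G.SegmentsConnected u) (hw : G.SegmentsConnected w)
    (hadj : G.Adj (u ⊤) (w ⊥)) : G.SegmentsConnected (Fin.append u w) := by
  refine Fin.addCases (fun j => ⟨?_, ?_⟩) (fun j => ⟨?_, ?_⟩)
  · rw [Fin.image_append_Iic_castAdd]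
    exact (hu j).1
  · rw [Fin.image_append_Ici_castAdd]
    exact connected_induce_union (hu j).2.preconnected hw.connected_induce_range.preconnected
      (mem_image_of_mem u (mem_Ici.2 le_top)) (mem_range_self ⊥) hadj
  · rw [Fin.image_append_Iic_natAdd]
    exact connected_induce_union hu.connected_induce_range.preconnected (hw j).1.preconnected
      (mem_range_self ⊤) (mem_image_of_mem w (mem_Iic.2 bot_le)) hadj
  · rw [Fin.image_append_Ici_natAdd]
    exact (hw j).2

end SegmentsConnected

end SimpleGraph

/-- If a graph `G'` has a handle decomposition `(X, G'')` — `G''` a subgraph of `G'`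
with vertex set `W`, `X = (u 0, …, u (k-1))` a path in `G'` avoiding `W`, and every
vertex of `G'` in `W` or on `X` — and `Y = (w 0, …, w (q-1))` is a bipolar numbering of
`G''` whose first vertex is adjacent in `G'` to the last vertex of `X`, then the
concatenation `Fin.append u w` is a bipolar numbering of `G'`. -/
theorem stmt_14 {V : Type} (G' : SimpleGraph V)
    (H : SimpleGraph V) (W : Set V)
    (hHle : H ≤ G')
    (k q : ℕ) (hk : 1 ≤ k) (hq : 1 ≤ q)
    (u : Fin k → V) (w : Fin q → V)
    (hu_inj : Function.Injective u)
    (hu_adj : ∀ (i : ℕ) (h : i + 1 < k), G'.Adj (u ⟨i, by omega⟩) (u ⟨i + 1, h⟩))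
    (hXW : ∀ i, u i ∉ W)
    (hcover : ∀ x : V, x ∈ W ∨ ∃ i, u i = x)
    (hw_inj : Function.Injective w)
    (hw_range : Set.range w = W)
    (hbip : ∀ j : Fin q,
      (H.induce (w '' {i | i ≤ j})).Connected ∧ (H.induce (w '' {i | j ≤ i})).Connected)
    (hadj : G'.Adj (u ⟨k - 1, by omega⟩) (w ⟨0, by omega⟩)) :
    Function.Bijective (Fin.append u w) ∧
    ∀ j : Fin (k + q),
      (G'.induce (Fin.append u w '' {i | i ≤ j})).Connected ∧
      (G'.induce (Fin.append u w '' {i | j ≤ i})).Connected := by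
  have : NeZero k := ⟨by omega⟩
  have : NeZero q := ⟨by omega⟩
  subst hw_range
  refine ⟨⟨Fin.append_injective_iff.2
    ⟨hu_inj, hw_inj, fun i j h => hXW i (h ▸ mem_range_self j)⟩, range_eq_univ.1 ?_⟩, ?_⟩
  · rw [Fin.range_append]
    exact eq_univ_of_forall fun x => (hcover x).symm
  · -- `⊤ : Fin k` and `⊥ : Fin q` unfold to `⟨k - 1, _⟩` and `0`.
    exact (SimpleGraph.segmentsConnected_of_adj_succ hu_adj).append
      (SimpleGraph.SegmentsConnected.mono hHle hbip) (hadj : G'.Adj (u ⊤) (w ⊥))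
end

section
/- Let G = (V,E) be a finite connected simple graph that admits a bipolar numbering. Then for any two monotone valuations ν₁, ν₂ on subsets of V there exists a contiguous allocation (A₁, A₂) of V to the two agents that is envy-free up to one outer good (EF1_outer). -/
/-!
Cut and choose along a bipolar numbering `v₁, …, v_q`. Every cut into a prefix and the
complementary suffix gives two contiguous pieces. Agent 0 cuts at the first `t` at which the
prefix `{v₁, …, v_t}` is worth at least the suffix with its first vertex `v_{t+1}` removed; by
minimality of `t` the suffix is also worth more than the prefix with its last vertex `v_t`
removed. Both removals leave a segment of the numbering, hence a connected piece, so agent 0 is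
EF1_outer whichever piece it receives, and agent 1 takes the piece it prefers.
-/

/-- A (possibly empty) set of vertices induces a connected subgraph. -/
def PieceConnected {V : Type} (G : SimpleGraph V) (s : Finset V) : Prop :=
  (G.induce (↑s : Set V)).Preconnected

/-- An allocation is envy-free up to `k` outer goods. -/
def EFkOuter {V : Type} [DecidableEq V] (G : SimpleGraph V) (k : ℕ) {n : ℕ}
    (ν : Fin n → Finset V → ℝ) (A : Fin n → Finset V) : Prop :=
  ∀ i j, i ≠ j → ∃ S : Finset V, S ⊆ A j ∧ S.card ≤ k ∧
    PieceConnected G (A j \ S) ∧ ν i (A i) ≥ ν i (A j \ S)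

/-- `G` admits a bipolar numbering: an enumeration of its vertices all of whose initial
and final segments induce connected subgraphs. -/
def HasBipolarNumbering {V : Type} (G : SimpleGraph V) : Prop :=
  ∃ (k : ℕ) (v : Fin k → V), Function.Bijective v ∧
    ∀ j : Fin k,
      (G.induce (v '' {i | i ≤ j})).Connected ∧ (G.induce (v '' {i | j ≤ i})).Connected

open Finset

variable {V : Type} {G : SimpleGraph V}

lemma pieceConnected_empty : PieceConnected G ∅ := by
  rintro ⟨a, ha⟩
  simp at ha

def EFkOuterToward [DecidableEq V] (G : SimpleGraph V) (k : ℕ) (u : Finset V → ℝ)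
    (X Y : Finset V) : Prop :=
  ∃ S : Finset V, S ⊆ Y ∧ S.card ≤ k ∧ PieceConnected G (Y \ S) ∧ u X ≥ u (Y \ S)

section EFkOuterToward

variable [DecidableEq V] {k : ℕ} {u : Finset V → ℝ} {X Y Y' : Finset V}

lemma EFkOuterToward.of_subset (hY' : Y' ⊆ Y) (hcard : (Y \ Y').card ≤ k)
    (hconn : PieceConnected G Y') (hu : u Y' ≤ u X) : EFkOuterToward G k u X Y :=
  ⟨Y \ Y', sdiff_subset, hcard, by rwa [_root_.sdiff_sdiff_eq_self hY'],
    by rwa [_root_.sdiff_sdiff_eq_self hY']⟩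

lemma EFkOuterToward.of_le (hconn : PieceConnected G Y) (hu : u Y ≤ u X) :
    EFkOuterToward G k u X Y :=
  .of_subset Subset.rfl (by simp) hconn hu

end EFkOuterToward

section Numbering

variable [Fintype V] {k : ℕ} (e : Fin k ≃ V)

def lowerPart (t : ℕ) : Finset V := univ.filter fun x => (e.symm x : ℕ) < t

def upperPart (t : ℕ) : Finset V := univ.filter fun x => t ≤ (e.symm x : ℕ)

variable {e}

@[simp] lemma mem_lowerPart {t : ℕ} {x : V} : x ∈ lowerPart e t ↔ (e.symm x : ℕ) < t := by
  simp [lowerPart]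

@[simp] lemma mem_upperPart {t : ℕ} {x : V} : x ∈ upperPart e t ↔ t ≤ (e.symm x : ℕ) := by
  simp [upperPart]

variable (e)

lemma disjoint_lowerPart_upperPart (t : ℕ) : Disjoint (lowerPart e t) (upperPart e t) := by
  simp only [disjoint_left, mem_lowerPart, mem_upperPart]
  omega

lemma lowerPart_union_upperPart [DecidableEq V] (t : ℕ) :
    lowerPart e t ∪ upperPart e t = univ := by
  ext x
  simp only [mem_union, mem_lowerPart, mem_upperPart, mem_univ, iff_true]
  omega

lemma lowerPart_zero : lowerPart e 0 = ∅ := by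
  ext x
  simp

lemma upperPart_eq_empty {t : ℕ} (ht : k ≤ t) : upperPart e t = ∅ := by
  ext x
  simp only [mem_upperPart, notMem_empty, iff_false, not_le]
  exact (e.symm x).isLt.trans_le ht

lemma lowerPart_mono : Monotone (lowerPart e) := fun _ _ h _ => by
  simp only [mem_lowerPart]
  omega

lemma upperPart_anti : Antitone (upperPart e) := fun _ _ h _ => by
  simp only [mem_upperPart]
  omega

lemma card_upperPart_sdiff_succ_le_one [DecidableEq V] (t : ℕ) :
    (upperPart e t \ upperPart e (t + 1)).card ≤ 1 :=
  card_le_one.2 fun x hx y hy => e.symm.injective <| Fin.ext <| by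
    simp only [mem_sdiff, mem_upperPart] at hx hy
    omega

lemma card_lowerPart_sdiff_pred_le_one [DecidableEq V] (t : ℕ) :
    (lowerPart e t \ lowerPart e (t - 1)).card ≤ 1 :=
  card_le_one.2 fun x hx y hy => e.symm.injective <| Fin.ext <| by
    simp only [mem_sdiff, mem_lowerPart] at hx hy
    omega

lemma pieceConnected_lowerPart (h : ∀ j, (G.induce (e '' {i | i ≤ j})).Connected) {t : ℕ}
    (ht : t ≤ k) : PieceConnected G (lowerPart e t) := by
  rcases Nat.eq_zero_or_pos t with rfl | hpos
  · rw [lowerPart_zero]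
    exact pieceConnected_empty
  · have hseg : (↑(lowerPart e t) : Set V) = e '' {i | i ≤ ⟨t - 1, by omega⟩} := by
      ext x
      simp only [coe_filter, lowerPart, mem_univ, true_and, Set.mem_ofPred_eq,
        e.image_eq_preimage_symm, Set.mem_preimage, Fin.le_def]
      omega
    rw [PieceConnected, hseg]
    exact (h _).preconnected

lemma pieceConnected_upperPart (h : ∀ j, (G.induce (e '' {i | j ≤ i})).Connected) (t : ℕ) :
    PieceConnected G (upperPart e t) := by
  rcases lt_or_ge t k with ht | ht
  · have hseg : (↑(upperPart e t) : Set V) = e '' {i | ⟨t, ht⟩ ≤ i} := by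
      ext x
      simp only [coe_filter, upperPart, mem_univ, true_and, Set.mem_ofPred_eq,
        e.image_eq_preimage_symm, Set.mem_preimage, Fin.le_def]
    rw [PieceConnected, hseg]
    exact (h _).preconnected
  · rw [upperPart_eq_empty e ht]
    exact pieceConnected_empty

theorem exists_cut_efkOuterToward [DecidableEq V]
    (hlow : ∀ j, (G.induce (e '' {i | i ≤ j})).Connected)
    (hup : ∀ j, (G.induce (e '' {i | j ≤ i})).Connected)
    {u : Finset V → ℝ} (hu : Monotone u) :
    ∃ t ≤ k, EFkOuterToward G 1 u (lowerPart e t) (upperPart e t) ∧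
      EFkOuterToward G 1 u (upperPart e t) (lowerPart e t) := by
  have hk : u (upperPart e (k + 1)) ≤ u (lowerPart e k) := by
    rw [upperPart_eq_empty e (by omega)]
    exact hu (empty_subset _)
  have hex : ∃ t, u (upperPart e (t + 1)) ≤ u (lowerPart e t) := ⟨k, hk⟩
  set t := Nat.find hex
  have htk : t ≤ k := Nat.find_min' hex hk
  refine ⟨t, htk, .of_subset (upperPart_anti e (t.le_add_right 1))
    (card_upperPart_sdiff_succ_le_one e t) (pieceConnected_upperPart e hup _) (Nat.find_spec hex),
    .of_subset (lowerPart_mono e (t.sub_le 1)) (card_lowerPart_sdiff_pred_le_one e t)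
    (pieceConnected_lowerPart e hlow (by omega)) ?_⟩
  rcases Nat.eq_zero_or_pos t with h0 | hpos
  · rw [h0, lowerPart_zero]
    exact hu (empty_subset _)
  · have hmin : ¬u (upperPart e (t - 1 + 1)) ≤ u (lowerPart e (t - 1)) :=
      Nat.find_min hex (Nat.sub_lt hpos one_pos)
    rw [Nat.sub_add_cancel hpos, not_le] at hmin
    exact hmin.le

end Numbering

section CutAndChoose

variable [Fintype V] [DecidableEq V] {k : ℕ} {ν : Fin 2 → Finset V → ℝ} {X Y : Finset V}

lemma contiguous_efkOuter_pair (hdisj : Disjoint X Y) (hunion : X ∪ Y = univ)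
    (hX : PieceConnected G X) (hY : PieceConnected G Y)
    (h₀ : EFkOuterToward G k (ν 0) X Y) (h₁ : EFkOuterToward G k (ν 1) Y X) :
    (Pairwise fun i j => Disjoint (![X, Y] i) (![X, Y] j)) ∧
      univ.biUnion ![X, Y] = univ ∧
      (∀ i, PieceConnected G (![X, Y] i)) ∧
      EFkOuter G k ν ![X, Y] := by
  refine ⟨?_, ?_, ?_, ?_⟩
  · intro i j hij
    fin_cases i <;> fin_cases j <;> simp_all [disjoint_comm]
  · simpa [Fin.univ_succ] using hunion
  · intro i
    fin_cases i <;> assumption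
  · intro i j hij
    fin_cases i <;> fin_cases j <;> first | exact absurd rfl hij | assumption

theorem exists_contiguous_efkOuter_of_cut (hdisj : Disjoint X Y) (hunion : X ∪ Y = univ)
    (hX : PieceConnected G X) (hY : PieceConnected G Y)
    (hXY : EFkOuterToward G k (ν 0) X Y) (hYX : EFkOuterToward G k (ν 0) Y X) :
    ∃ A : Fin 2 → Finset V,
      (Pairwise fun i j => Disjoint (A i) (A j)) ∧
      univ.biUnion A = univ ∧
      (∀ i, PieceConnected G (A i)) ∧
      EFkOuter G k ν A := by
  rcases le_total (ν 1 X) (ν 1 Y) with h | h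
  · exact ⟨_, contiguous_efkOuter_pair hdisj hunion hX hY hXY (.of_le hX h)⟩
  · exact ⟨_, contiguous_efkOuter_pair hdisj.symm (union_comm X Y ▸ hunion) hY hX hYX
      (.of_le hY h)⟩

end CutAndChoose

theorem stmt_17_general {V : Type} [Fintype V] [DecidableEq V] (G : SimpleGraph V)
    (hbip : HasBipolarNumbering G)
    (ν : Fin 2 → Finset V → ℝ)
    (hν : ∀ i, ν i ∅ = 0 ∧ ∀ X Y : Finset V, X ⊆ Y → ν i X ≤ ν i Y) :
    ∃ A : Fin 2 → Finset V,
      (Pairwise fun i j => Disjoint (A i) (A j)) ∧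
      Finset.univ.biUnion A = Finset.univ ∧
      (∀ i, PieceConnected G (A i)) ∧
      EFkOuter G 1 ν A := by
  obtain ⟨k, v, hv, hseg⟩ := hbip
  set e := Equiv.ofBijective v hv
  obtain ⟨t, htk, hXY, hYX⟩ := exists_cut_efkOuterToward e (fun j => (hseg j).1)
    (fun j => (hseg j).2) (u := ν 0) fun X Y => (hν 0).2 X Y
  exact exists_contiguous_efkOuter_of_cut (disjoint_lowerPart_upperPart e t)
    (lowerPart_union_upperPart e t) (pieceConnected_lowerPart e (fun j => (hseg j).1) htk)
    (pieceConnected_upperPart e (fun j => (hseg j).2) t) hXY hYX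

/-- A finite connected graph admitting a bipolar numbering guarantees contiguous
EF1-outer allocations for two agents with monotone valuations. -/
theorem stmt_17 {V : Type} [Fintype V] [DecidableEq V] (G : SimpleGraph V)
    (hconn : G.Connected) (hbip : HasBipolarNumbering G)
    (ν : Fin 2 → Finset V → ℝ)
    (hν : ∀ i, ν i ∅ = 0 ∧ ∀ X Y : Finset V, X ⊆ Y → ν i X ≤ ν i Y) :
    ∃ A : Fin 2 → Finset V,
      (Pairwise fun i j => Disjoint (A i) (A j)) ∧
      Finset.univ.biUnion A = Finset.univ ∧
      (∀ i, PieceConnected G (A i)) ∧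
      EFkOuter G 1 ν A :=
  stmt_17_general G hbip ν hν
end

section
/- Let G = (V,E) be a finite connected simple graph that contains a trident. Then G does not guarantee EF1_outer allocations for two agents even with identical, additive, binary valuations: there exists a weight function w : V → {0,1} such that, with both agents using the additive valuation ν(S) = Σ_{v∈S} w(v), no contiguous allocation (A₁, A₂) of V is envy-free up to one outer good (EF1_outer). -/
/-!
Put weight 1 on the three contact vertices `sᵢ` and on one further vertex `tᵢ` of each arm.
In a contiguous allocation one bundle holds two of the `tᵢ`, say `tₐ` and `t_b`; being
connected, it also holds `sₐ` and `s_b`, since every path from `tₐ` to `t_b` passes through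
them. That bundle is worth at least 4 out of 6 (type II) or 3 out of 4 (type I, where all
`sᵢ` coincide), so after removing any single good it is still worth more than the other
bundle, whose owner therefore envies it.
-/

/-- `G` contains a trident: connected subgraphs (given by their vertex sets)
`C, P₁, P₂, P₃`, with contact vertices `s₁, s₂, s₃`, such that each `Pᵢ` meets `C`
exactly in `sᵢ`, each `Pᵢ` has at least two vertices, every path between `Pᵢ` and `Pⱼ`
(for `i ≠ j`) passes through both `sᵢ` and `sⱼ`, and either `C` is a single vertex
(type I) or the three contact vertices are pairwise distinct (type II). -/
def HasTrident {V : Type} (G : SimpleGraph V) : Prop :=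
  ∃ (C P₁ P₂ P₃ : Set V) (s₁ s₂ s₃ : V),
    (G.induce C).Connected ∧ (G.induce P₁).Connected ∧
    (G.induce P₂).Connected ∧ (G.induce P₃).Connected ∧
    P₁ ∩ C = {s₁} ∧ P₂ ∩ C = {s₂} ∧ P₃ ∩ C = {s₃} ∧
    2 ≤ P₁.ncard ∧ 2 ≤ P₂.ncard ∧ 2 ≤ P₃.ncard ∧
    (∀ x y : V, x ∈ P₁ → y ∈ P₂ → ∀ p : G.Walk x y, s₁ ∈ p.support ∧ s₂ ∈ p.support) ∧
    (∀ x y : V, x ∈ P₁ → y ∈ P₃ → ∀ p : G.Walk x y, s₁ ∈ p.support ∧ s₃ ∈ p.support) ∧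
    (∀ x y : V, x ∈ P₂ → y ∈ P₃ → ∀ p : G.Walk x y, s₂ ∈ p.support ∧ s₃ ∈ p.support) ∧
    ((∃ s : V, C = {s}) ∨ (s₁ ≠ s₂ ∧ s₁ ≠ s₃ ∧ s₂ ≠ s₃))

open Finset

lemma SimpleGraph.mem_of_induce_preconnected {V : Type} {G : SimpleGraph V} {A : Set V}
    (hA : (G.induce A).Preconnected) {x y z : V} (hx : x ∈ A) (hy : y ∈ A)
    (hz : ∀ p : G.Walk x y, z ∈ p.support) : z ∈ A := by
  obtain ⟨p⟩ := hA ⟨x, hx⟩ ⟨y, hy⟩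
  have hmem := hz (p.map (SimpleGraph.Embedding.induce A).toHom)
  obtain ⟨u, -, rfl⟩ := List.mem_map.mp (p.support_map _ ▸ hmem)
  exact u.2

lemma sum_ite_mem_lt_sum_sdiff {V : Type} [DecidableEq V] {W A B S : Finset V}
    (hAB : Disjoint A B) (hS : #S ≤ 1) (hW : #W + 1 < 2 * #(A ∩ W)) :
    ∑ v ∈ B, (if v ∈ W then 1 else 0 : ℝ) < ∑ v ∈ A \ S, (if v ∈ W then 1 else 0 : ℝ) := by
  rw [Finset.sum_boole, Finset.sum_boole]
  have hsplit : #(A ∩ W) + #(B ∩ W) ≤ #W := by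
    rw [← card_union_of_disjoint (hAB.mono inter_subset_left inter_subset_left)]
    exact card_le_card (union_subset inter_subset_right inter_subset_right)
  have hremove : #(A ∩ W) ≤ #((A \ S) ∩ W) + #S := by
    calc #(A ∩ W) ≤ #((A \ S) ∩ W ∪ S) := card_le_card fun v hv => by
            by_cases hvS : v ∈ S <;> simp_all
      _ ≤ #((A \ S) ∩ W) + #S := card_union_le _ _
  exact_mod_cast (by omega : #(B ∩ W) < #((A \ S) ∩ W))

/-- `tip i` is a vertex of the `i`-th arm `Pᵢ` of a trident other than its contact vertex
`contact i = sᵢ`. -/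
structure TridentSkeleton {V : Type} (G : SimpleGraph V) where
  contact : Fin 3 → V
  tip : Fin 3 → V
  contact_mem_support : ∀ i j, i ≠ j → ∀ p : G.Walk (tip i) (tip j), contact i ∈ p.support
  tip_injective : Function.Injective tip
  tip_ne_contact : ∀ i j, tip i ≠ contact j
  contact_const_or_injective : (∀ i j, contact i = contact j) ∨ Function.Injective contact

namespace TridentSkeleton

variable {V : Type} {G : SimpleGraph V} (T : TridentSkeleton G)

def ofArms (P : Fin 3 → Set V) (s t : Fin 3 → V) (hs : ∀ i, s i ∈ P i) (ht : ∀ i, t i ∈ P i)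
    (hts : ∀ i, t i ≠ s i)
    (hsep : ∀ i j, i ≠ j → ∀ x ∈ P i, ∀ y ∈ P j, ∀ p : G.Walk x y, s i ∈ p.support)
    (htype : (∀ i j, s i = s j) ∨ Function.Injective s) : TridentSkeleton G :=
  have hinter : ∀ i j, i ≠ j → ∀ x ∈ P i, x ∈ P j → x = s i := fun i j hij x hi hj => by
    simpa [eq_comm] using hsep i j hij x hi x hj .nil
  { contact := s
    tip := t
    contact_mem_support := fun i j hij => hsep i j hij _ (ht i) _ (ht j)
    tip_injective := fun i j hij => by
      by_contra hne
      exact hts i (hinter i j hne _ (ht i) (hij ▸ ht j))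
    tip_ne_contact := fun i j hij => by
      rcases eq_or_ne i j with rfl | hne
      · exact hts i hij
      · exact hts i (hinter i j hne _ (ht i) (hij ▸ hs j))
    contact_const_or_injective := htype }

lemma mem_support_both {i j : Fin 3} (hij : i ≠ j) (p : G.Walk (T.tip i) (T.tip j)) :
    T.contact i ∈ p.support ∧ T.contact j ∈ p.support :=
  ⟨T.contact_mem_support i j hij p, by
    simpa using T.contact_mem_support j i hij.symm p.reverse⟩

variable [DecidableEq V]

def weightSet : Finset V := univ.image T.contact ∪ univ.image T.tip

lemma card_weightSet : #T.weightSet = #(univ.image T.contact) + 3 := by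
  rw [weightSet, card_union_of_disjoint, card_image_of_injective _ T.tip_injective]
  · rfl
  · simp only [disjoint_left, mem_image, mem_univ, true_and, not_exists]
    rintro _ ⟨j, rfl⟩ i
    exact T.tip_ne_contact i j

lemma card_image_contact_lt {a b : Fin 3} (hab : a ≠ b) :
    #(univ.image T.contact) < 2 * #{T.contact a, T.contact b} := by
  rcases T.contact_const_or_injective with hconst | hinj
  · have himage : univ.image T.contact = {T.contact a} := by
      ext v; simp [eq_comm, hconst _ a]
    simp [himage, hconst b a]
  · rw [card_image_of_injective _ hinj, card_pair (hinj.ne hab)]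
    simp

lemma two_mul_card_inter_weightSet_gt {A : Finset V} (hA : (G.induce (A : Set V)).Preconnected)
    {a b : Fin 3} (hab : a ≠ b) (ha : T.tip a ∈ A) (hb : T.tip b ∈ A) :
    #T.weightSet + 1 < 2 * #(A ∩ T.weightSet) := by
  obtain ⟨hsa, hsb⟩ : T.contact a ∈ A ∧ T.contact b ∈ A := by
    have h := T.mem_support_both hab
    exact ⟨SimpleGraph.mem_of_induce_preconnected hA ha hb fun p => (h p).1,
      SimpleGraph.mem_of_induce_preconnected hA ha hb fun p => (h p).2⟩
  have hsub : {T.contact a, T.contact b} ∪ {T.tip a, T.tip b} ⊆ A ∩ T.weightSet := by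
    intro v hv
    simp only [mem_union, mem_insert, mem_singleton] at hv
    simp only [weightSet, mem_inter, mem_union, mem_image, mem_univ, true_and]
    rcases hv with (rfl | rfl) | (rfl | rfl) <;> simp_all
  have hcard : #({T.contact a, T.contact b} ∪ {T.tip a, T.tip b}) =
      #{T.contact a, T.contact b} + 2 := by
    rw [card_union_of_disjoint, card_pair (T.tip_injective.ne hab)]
    simp [T.tip_ne_contact]
  have := card_le_card hsub
  have := T.card_image_contact_lt hab
  rw [card_weightSet]
  omega

end TridentSkeleton

lemma HasTrident.nonempty_tridentSkeleton {V : Type} {G : SimpleGraph V} (h : HasTrident G) :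
    Nonempty (TridentSkeleton G) := by
  obtain ⟨C, P₁, P₂, P₃, s₁, s₂, s₃, -, -, -, -, hI₁, hI₂, hI₃, hn₁, hn₂, hn₃,
    h₁₂, h₁₃, h₂₃, htype⟩ := h
  have hcontact : ∀ {P : Set V} {s : V}, P ∩ C = {s} → s ∈ P ∧ s ∈ C := fun h =>
    (h.symm ▸ rfl : _ ∈ _ ∩ C)
  obtain ⟨t₁, ht₁, ht₁s⟩ := Set.exists_ne_of_one_lt_ncard hn₁ s₁
  obtain ⟨t₂, ht₂, ht₂s⟩ := Set.exists_ne_of_one_lt_ncard hn₂ s₂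
  obtain ⟨t₃, ht₃, ht₃s⟩ := Set.exists_ne_of_one_lt_ncard hn₃ s₃
  have hrev : ∀ {Q R : Set V} {a b : V}, (∀ x y, x ∈ Q → y ∈ R → ∀ p : G.Walk x y,
      a ∈ p.support ∧ b ∈ p.support) → ∀ y ∈ R, ∀ x ∈ Q, ∀ p : G.Walk y x, b ∈ p.support :=
    fun h y hy x hx p => by simpa using (h x y hx hy p.reverse).2
  refine ⟨.ofArms ![P₁, P₂, P₃] ![s₁, s₂, s₃] ![t₁, t₂, t₃] ?_ ?_ ?_ ?_ ?_⟩
  · intro i; fin_cases i <;> simp [(hcontact hI₁).1, (hcontact hI₂).1, (hcontact hI₃).1]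
  · intro i; fin_cases i <;> simpa
  · intro i; fin_cases i <;> simpa
  · intro i j hij
    fin_cases i <;> fin_cases j <;> first
      | exact absurd rfl hij
      | exact fun x hx y hy p => (h₁₂ x y hx hy p).1
      | exact fun x hx y hy p => (h₁₃ x y hx hy p).1
      | exact fun x hx y hy p => (h₂₃ x y hx hy p).1
      | exact hrev h₁₂
      | exact hrev h₁₃
      | exact hrev h₂₃
  · rcases htype with ⟨c, rfl⟩ | ⟨h₁₂, h₁₃, h₂₃⟩
    · left
      have h₁ := (hcontact hI₁).2; have h₂ := (hcontact hI₂).2; have h₃ := (hcontact hI₃).2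
      rw [Set.mem_singleton_iff] at h₁ h₂ h₃
      intro i j; fin_cases i <;> fin_cases j <;> simp [h₁, h₂, h₃]
    · right
      intro i j; fin_cases i <;> fin_cases j <;> simp [h₁₂, h₁₃, h₂₃, h₁₂.symm, h₁₃.symm, h₂₃.symm]

theorem stmt_18_general {V : Type} [Fintype V] [DecidableEq V] (G : SimpleGraph V)
    (htri : HasTrident G) :
    ∃ w : V → ℝ, (∀ v, w v = 0 ∨ w v = 1) ∧
      ∀ A : Fin 2 → Finset V,
        (Pairwise fun i j => Disjoint (A i) (A j)) →
        Finset.univ.biUnion A = Finset.univ →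
        (∀ i, (G.induce ((A i : Finset V) : Set V)).Preconnected) →
        ¬ (∀ i j : Fin 2, i ≠ j → ∃ S : Finset V, S ⊆ A j ∧ S.card ≤ 1 ∧
            (G.induce ((A j \ S : Finset V) : Set V)).Preconnected ∧
            ∑ x ∈ A i, w x ≥ ∑ x ∈ A j \ S, w x) := by
  obtain ⟨T⟩ := htri.nonempty_tridentSkeleton
  refine ⟨fun v => if v ∈ T.weightSet then 1 else 0, fun v => by by_cases hv : v ∈ T.weightSet <;> simp [hv], ?_⟩
  intro A hdisj hcover hpre hEF
  have howner : ∀ v, ∃ i, v ∈ A i := fun v => by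
    simpa [← hcover] using mem_univ v
  choose owner howner using fun k => howner (T.tip k)
  obtain ⟨a, b, hab, hsame⟩ := Fintype.exists_ne_map_eq_of_card_lt owner (by simp)
  have hother : owner a + 1 ≠ owner a := by simp
  obtain ⟨S, -, hS, -, henvy⟩ := hEF _ _ hother
  exact (sum_ite_mem_lt_sum_sdiff (hdisj hother.symm) hS
    (T.two_mul_card_inter_weightSet_gt (hpre _) hab (howner a) (hsame ▸ howner b))).not_ge henvy

/-- A finite connected graph containing a trident fails to guarantee EF1-outer
allocations for two agents, even with identical, additive, binary valuations: there is
a `{0,1}`-weighting such that no contiguous allocation is envy-free up to one outer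
good. -/
theorem stmt_18 {V : Type} [Fintype V] [DecidableEq V] (G : SimpleGraph V)
    (hconn : G.Connected) (htri : HasTrident G) :
    ∃ w : V → ℝ, (∀ v, w v = 0 ∨ w v = 1) ∧
      ∀ A : Fin 2 → Finset V,
        (Pairwise fun i j => Disjoint (A i) (A j)) →
        Finset.univ.biUnion A = Finset.univ →
        (∀ i, (G.induce ((A i : Finset V) : Set V)).Preconnected) →
        ¬ (∀ i j : Fin 2, i ≠ j → ∃ S : Finset V, S ⊆ A j ∧ S.card ≤ 1 ∧
            (G.induce ((A j \ S : Finset V) : Set V)).Preconnected ∧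
            ∑ x ∈ A i, w x ≥ ∑ x ∈ A j \ S, w x) :=
  stmt_18_general G htri
end
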